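/- arXiv:2512.12805 — 7 statements merged into one kernel-verified Lean document; each statement's English description precedes it below -/
import Mathlib

section
/- Let (χ, dist, μ) be a metric space equipped with a Borel probability measure μ, and let C ≥ 1 and D > 0 be constants such that μ(B_{r/2}(x)) ≥ (1/C)·r^D for every x ∈ χ and every r ∈ (0, 1], where B_{r/2}(x) denotes the open ball of radius r/2 centered at x. Then for every r ∈ (0, 1] there exists a finite collection 𝒥 of pairwise disjoint Borel subsets of χ whose union is χ such that every I ∈ 𝒥 satisfies diam(I) ≤ 2r and μ(I) ≥ (1/C)·r^D; in particular, the number of sets satisfies |𝒥| ≤ C·r^{−D}. -/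
/-!
Take a maximal `r`-separated set `N`. The balls of radius `r/2` around its points are disjoint,
so the regularity bound caps `|N|` by `C r^{-D}` (in particular `N` is finite), and by maximality
the closed balls of radius `r` around them cover the space. Make these closed balls disjoint in
some order of `N`, but let every open `r/2`-ball stay whole inside the piece of its own centre:
each piece then lies in an `r`-ball and contains an `r/2`-ball.
-/

open MeasureTheory Metric Set Function
open scoped NNReal ENNReal

section DisjointedWithCores

variable {α ι : Type*} [LinearOrder ι] [LocallyFiniteOrderBot ι]

def disjointedWithCores (K U : ι → Set α) (i : ι) : Set α :=
  K i ∪ (disjointed U i \ ⋃ j, K j)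

variable {K U : ι → Set α}

lemma disjointedWithCores_subset (hKU : ∀ i, K i ⊆ U i) (i : ι) :
    disjointedWithCores K U i ⊆ U i :=
  union_subset (hKU i) (sdiff_subset.trans (disjointed_subset U i))

lemma pairwise_disjoint_disjointedWithCores (hK : Pairwise (Disjoint on K)) :
    Pairwise (Disjoint on disjointedWithCores K U) := by
  intro i j hij
  have hKD : ∀ i j, Disjoint (K i) (disjointed U j \ ⋃ k, K k) := fun i _ =>
    disjoint_sdiff_right.mono_left (subset_iUnion K i)
  refine Disjoint.union_left (Disjoint.union_right (hK hij) (hKD i j)) (Disjoint.union_right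
    (hKD j i).symm ((disjoint_disjointed U hij).mono sdiff_subset sdiff_subset))

lemma iUnion_disjointedWithCores (hKU : ∀ i, K i ⊆ U i) :
    ⋃ i, disjointedWithCores K U i = ⋃ i, U i := by
  refine (iUnion_mono (disjointedWithCores_subset hKU)).antisymm fun x hx => ?_
  rw [← iUnion_disjointed] at hx
  obtain ⟨i, hi⟩ := mem_iUnion.1 hx
  by_cases hxK : x ∈ ⋃ j, K j
  · obtain ⟨j, hj⟩ := mem_iUnion.1 hxK
    exact mem_iUnion.2 ⟨j, Or.inl hj⟩
  · exact mem_iUnion.2 ⟨i, Or.inr ⟨hi, hxK⟩⟩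

lemma MeasurableSet.disjointedWithCores [MeasurableSpace α] [Countable ι]
    (hK : ∀ i, MeasurableSet (K i)) (hU : ∀ i, MeasurableSet (U i)) (i : ι) :
    MeasurableSet (disjointedWithCores K U i) := by
  refine (hK i).union (MeasurableSet.diff ?_ (.iUnion hK))
  rw [disjointed_apply, Finset.sup_set_eq_biUnion]
  exact (hU i).diff (Finset.measurableSet_biUnion _ fun j _ => hU j)

end DisjointedWithCores

namespace Metric

variable {X : Type*} [PseudoMetricSpace X]

lemma IsSeparated.lt_dist {ε : ℝ≥0} {s : Set X} (hs : IsSeparated ε s) {x y : X}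
    (hx : x ∈ s) (hy : y ∈ s) (hxy : x ≠ y) : (ε : ℝ) < dist x y := by
  have : (ε : ℝ≥0∞) < edist x y := hs hx hy hxy
  rw [edist_nndist, ENNReal.coe_lt_coe] at this
  exact_mod_cast this

lemma packingNumber_le_of_forall_card_le {ε : ℝ≥0} {A : Set X} {n : ℕ}
    (h : ∀ t : Finset X, (t : Set X) ⊆ A → IsSeparated ε (t : Set X) → t.card ≤ n) :
    packingNumber ε A ≤ n := by
  refine iSup₂_le fun C hCA => iSup_le fun hC => ?_
  by_contra! hlt
  obtain ⟨t, htC, ht⟩ := exists_subset_encard_eq (Order.add_one_le_of_lt hlt)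
  have htfin : t.Finite := finite_of_encard_eq_coe ht
  have hcard : htfin.toFinset.card = n + 1 := by
    have := htfin.encard_eq_coe_toFinset_card
    rw [ht] at this
    exact_mod_cast this.symm
  have := h htfin.toFinset (by simpa using htC.trans hCA) (by simpa using hC.subset htC)
  omega

lemma IsSeparated.card_mul_le_measure_univ [MeasurableSpace X] [OpensMeasurableSpace X]
    (μ : Measure X) {ε : ℝ≥0} {m : ℝ≥0∞} (hm : ∀ x, m ≤ μ (ball x (ε / 2))) {t : Finset X}
    (ht : IsSeparated ε (t : Set X)) : t.card * m ≤ μ univ := by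
  have hdisj : (t : Set X).PairwiseDisjoint fun x => ball x (ε / 2) := fun x hx y hy hxy =>
    ball_disjoint_ball (by linarith [ht.lt_dist hx hy hxy])
  calc t.card * m = ∑ _x ∈ t, m := by rw [Finset.sum_const, nsmul_eq_mul]
    _ ≤ ∑ x ∈ t, μ (ball x (ε / 2)) := Finset.sum_le_sum fun x _ => hm x
    _ = μ (⋃ x ∈ t, ball x (ε / 2)) :=
      (measure_biUnion_finset hdisj fun _ _ => measurableSet_ball).symm
    _ ≤ μ univ := measure_mono (subset_univ _)

theorem exists_partition_of_isSeparated_of_isCover [MeasurableSpace X] [OpensMeasurableSpace X]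
    {ε : ℝ≥0} {N : Set X} (hN : N.Finite) (hsep : IsSeparated ε N) (hcov : IsCover ε univ N) :
    ∃ 𝒥 : Finset (Set X), (∀ I ∈ 𝒥, MeasurableSet I) ∧ (𝒥 : Set (Set X)).PairwiseDisjoint id ∧
      ⋃₀ (𝒥 : Set (Set X)) = univ ∧ 𝒥.card ≤ N.ncard ∧
      ∀ I ∈ 𝒥, diam I ≤ 2 * ε ∧ ∃ x, ball x (ε / 2) ⊆ I := by
  have := hN.to_subtype
  let x : Fin (Nat.card N) → X := (↑) ∘ (Finite.equivFin N).symm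
  have hx : range x = N := by
    rw [(Finite.equivFin N).symm.surjective.range_comp, Subtype.range_coe]
  have hxN : ∀ i, x i ∈ N := fun i => hx ▸ mem_range_self i
  have hxinj : Injective x := Subtype.val_injective.comp (Finite.equivFin N).symm.injective
  let P := disjointedWithCores (fun i => ball (x i) (ε / 2)) (fun i => closedBall (x i) ε)
  have hcores : ∀ i, ball (x i) (ε / 2) ⊆ closedBall (x i) ε := fun i =>
    ball_subset_closedBall.trans (closedBall_subset_closedBall (by linarith [ε.2]))
  have hcoe : ((Finset.univ.image P : Finset (Set X)) : Set (Set X)) = range P := by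
    rw [Finset.coe_image, Finset.coe_univ, image_univ]
  refine ⟨Finset.univ.image P, ?_, ?_, ?_, ?_, ?_⟩
  · simp only [Finset.forall_mem_image, Finset.mem_univ, forall_const]
    exact MeasurableSet.disjointedWithCores (fun _ => measurableSet_ball)
      (fun _ => measurableSet_closedBall)
  · rw [hcoe]
    refine (pairwise_disjoint_disjointedWithCores fun i j hij => ?_).range_pairwise
    exact ball_disjoint_ball (by linarith [hsep.lt_dist (hxN i) (hxN j) (hxinj.ne hij)])
  · rw [hcoe, sUnion_range, iUnion_disjointedWithCores hcores]
    rw [isCover_iff_subset_iUnion_closedBall, ← hx, biUnion_range] at hcov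
    exact univ_subset_iff.1 hcov
  · calc (Finset.univ.image P).card ≤ Fintype.card (Fin (Nat.card N)) := Finset.card_image_le
      _ = N.ncard := by rw [Fintype.card_fin, Nat.card_coe_set_eq]
  · simp only [Finset.forall_mem_image, Finset.mem_univ, forall_const]
    intro i
    refine ⟨?_, x i, subset_union_left⟩
    calc diam (P i) ≤ diam (closedBall (x i) ε) :=
          diam_mono (disjointedWithCores_subset hcores i) isBounded_closedBall
      _ ≤ 2 * ε := diam_closedBall ε.2

end Metric

theorem stmt0_general
    {χ : Type*} [MetricSpace χ] [MeasurableSpace χ] [BorelSpace χ]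
    (μ : Measure χ) [IsProbabilityMeasure μ]
    (C D : ℝ) (hC : 1 ≤ C)
    (hreg : ∀ (x : χ) (r : ℝ), 0 < r → r ≤ 1 →
      ENNReal.ofReal ((1 / C) * r ^ D) ≤ μ (ball x (r / 2))) :
    ∀ r : ℝ, 0 < r → r ≤ 1 →
      ∃ 𝒥 : Finset (Set χ),
        (∀ I ∈ 𝒥, MeasurableSet I) ∧
        ((𝒥 : Set (Set χ)).PairwiseDisjoint id) ∧
        (⋃₀ (𝒥 : Set (Set χ)) = Set.univ) ∧
        (∀ I ∈ 𝒥, Metric.diam I ≤ 2 * r ∧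
          ENNReal.ofReal ((1 / C) * r ^ D) ≤ μ I) ∧
        ((𝒥.card : ℝ) ≤ C * r ^ (-D)) := by
  intro r hr hr1
  lift r to ℝ≥0 using hr.le
  have hpacking : ∀ t : Finset χ, IsSeparated r (t : Set χ) → (t.card : ℝ) ≤ C * r ^ (-D) := by
    intro t ht
    have h := ht.card_mul_le_measure_univ μ fun x => hreg x r hr hr1
    rw [measure_univ, ← ENNReal.ofReal_natCast, ← ENNReal.ofReal_mul (by positivity),
      ENNReal.ofReal_le_one] at h
    rw [Real.rpow_neg r.coe_nonneg, ← div_eq_mul_inv, le_div_iff₀ (by positivity)]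
    field_simp at h
    exact h
  have hbound : packingNumber r univ ≤ ⌊C * r ^ (-D)⌋₊ :=
    packingNumber_le_of_forall_card_le fun t _ ht => Nat.le_floor (hpacking t ht)
  have hfinite : packingNumber r (univ : Set χ) ≠ ⊤ :=
    ne_top_of_le_ne_top (ENat.natCast_ne_top _) hbound
  obtain ⟨hN, hNcard⟩ := encard_le_coe_iff_finite_ncard_le.1
    ((encard_maximalSeparatedSet hfinite).trans_le hbound)
  obtain ⟨𝒥, hmeas, hdisj, hcover, h𝒥card, hpieces⟩ :=
    exists_partition_of_isSeparated_of_isCover hN isSeparated_maximalSeparatedSet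
      (isCover_maximalSeparatedSet hfinite)
  refine ⟨𝒥, hmeas, hdisj, hcover, fun I hI => ?_, ?_⟩
  · obtain ⟨hdiam, x, hxI⟩ := hpieces I hI
    exact ⟨hdiam, (hreg x r hr hr1).trans (measure_mono hxI)⟩
  · calc (𝒥.card : ℝ) ≤ ⌊C * r ^ (-D)⌋₊ := by exact_mod_cast h𝒥card.trans hNcard
      _ ≤ C * r ^ (-D) := Nat.floor_le (by positivity)

/-- Covering lemma: a metric probability space whose measure is regular (every ball of
radius `r/2` has measure at least `(1/C) * r^D` for `r ∈ (0,1]`) admits, for every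
`r ∈ (0,1]`, a finite partition into pairwise disjoint Borel pieces of diameter at most
`2r`, each of measure at least `(1/C) * r^D`; in particular there are at most `C * r^(-D)`
pieces. -/
theorem stmt0
    {χ : Type*} [MetricSpace χ] [MeasurableSpace χ] [BorelSpace χ]
    (μ : Measure χ) [IsProbabilityMeasure μ]
    (C D : ℝ) (hC : 1 ≤ C) (hD : 0 < D)
    (hreg : ∀ (x : χ) (r : ℝ), 0 < r → r ≤ 1 →
      ENNReal.ofReal ((1 / C) * r ^ D) ≤ μ (ball x (r / 2))) :
    ∀ r : ℝ, 0 < r → r ≤ 1 →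
      ∃ 𝒥 : Finset (Set χ),
        (∀ I ∈ 𝒥, MeasurableSet I) ∧
        ((𝒥 : Set (Set χ)).PairwiseDisjoint id) ∧
        (⋃₀ (𝒥 : Set (Set χ)) = Set.univ) ∧
        (∀ I ∈ 𝒥, Metric.diam I ≤ 2 * r ∧
          ENNReal.ofReal ((1 / C) * r ^ D) ≤ μ I) ∧
        ((𝒥.card : ℝ) ≤ C * r ^ (-D)) :=
  stmt0_general μ C D hC hreg
end

section
/- Let (χ, μ) be a probability space, n a positive integer, C ≥ 1 and D > 0 constants, and let 𝒥 be a finite collection of pairwise disjoint measurable subsets of χ, each satisfying μ(I) ≥ (1/C)·n^{−D/(D+2)} (so that |𝒥| ≤ C·n^{D/(D+2)}). Let X₁, …, Xₙ be i.i.d. samples from μ and let μ_X = (1/n)·Σᵢ δ_{Xᵢ} be the empirical measure. Then for every τ > 0, with probability at least 1 − 2·C·n·exp(−τ²/(2 + τ·√C)), every I ∈ 𝒥 satisfies |μ_X(I)/μ(I) − 1| ≤ √C · n^{−1/(D+2)} · τ. -/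
/-!
For a single set `I` of probability `p`, the count `S = #{i | Xᵢ ∈ I}` is a sum of `n`
independent Bernoulli variables, so `𝔼 exp (t S) ≤ exp (n p (eᵗ - 1))`. The Chernoff bound at
`t = ±3a/(3+a)`, together with `eᵗ - 1 - t ≤ t² / (2 (1 - |t|/3))`, gives Bernstein's inequality
`P(|S/(np) - 1| > a) ≤ 2 exp (-n p a² / (2 + 2a/3))`. With `a = √C n^(-1/(D+2)) τ` and
`p ≥ n^(-D/(D+2)) / C` the exponent is at most `-τ² / (2 + τ√C)`, and disjointness bounds the
number of sets by `C n`, so a union bound finishes the proof.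
-/

open MeasureTheory ProbabilityTheory Real Finset
open scoped Nat

lemma exp_sub_one_sub_le_of_abs_lt_three {x : ℝ} (hx : |x| < 3) :
    exp x - 1 - x ≤ x ^ 2 / (2 * (1 - |x| / 3)) := by
  have hr₀ : 0 ≤ |x| / 3 := by positivity
  have hr₁ : |x| / 3 < 1 := by linarith
  have htail : exp x - 1 - x = ∑' n : ℕ, x ^ (n + 2) / (n + 2)! := by
    have hs : Summable (fun n : ℕ => x ^ n / n !) := summable_pow_div_factorial x
    rw [exp_eq_exp_ℝ, NormedSpace.exp_eq_tsum_div]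
    beta_reduce
    rw [← hs.sum_add_tsum_nat_add 2]
    simp only [sum_range_succ, range_one, sum_singleton, pow_zero, pow_one, Nat.factorial_zero,
      Nat.factorial_one, Nat.cast_one, div_one]
    ring
  -- `(n + 2)! ≥ 2 · 3ⁿ` dominates the tail by a geometric series of ratio `|x| / 3`
  have hterm (n : ℕ) : x ^ (n + 2) / (n + 2)! ≤ x ^ 2 / 2 * (|x| / 3) ^ n := by
    have hfac : (2 * 3 ^ n : ℝ) ≤ (n + 2)! := by
      rw [add_comm n]; exact_mod_cast (Nat.factorial_mul_pow_le_factorial (m := 2) (n := n))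
    calc x ^ (n + 2) / (n + 2)! ≤ x ^ 2 * |x| ^ n / (2 * 3 ^ n) := by
          gcongr
          calc x ^ (n + 2) ≤ |x ^ (n + 2)| := le_abs_self _
            _ = x ^ 2 * |x| ^ n := by rw [abs_pow, pow_add, mul_comm, sq_abs]
      _ = x ^ 2 / 2 * (|x| / 3) ^ n := by rw [div_pow]; ring
  have hgeom : Summable (fun n : ℕ => x ^ 2 / 2 * (|x| / 3) ^ n) :=
    (summable_geometric_of_lt_one hr₀ hr₁).mul_left _
  rw [htail]
  calc ∑' n : ℕ, x ^ (n + 2) / (n + 2)! ≤ ∑' n : ℕ, x ^ 2 / 2 * (|x| / 3) ^ n :=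
        ((summable_nat_add_iff 2).2 (summable_pow_div_factorial x)).tsum_le_tsum hterm hgeom
    _ = x ^ 2 / (2 * (1 - |x| / 3)) := by
        rw [tsum_mul_left, tsum_geometric_of_lt_one hr₀ hr₁]; field_simp

lemma exp_sub_one_sub_sub_abs_mul_le {a s : ℝ} (ha : 0 < a) (hs : |s| = 3 * a / (3 + a)) :
    exp s - 1 - s - |s| * a ≤ -a ^ 2 / (2 + 2 * a / 3) := by
  have hs3 : |s| < 3 := by rw [hs, div_lt_iff₀ (by linarith)]; linarith
  calc exp s - 1 - s - |s| * a ≤ s ^ 2 / (2 * (1 - |s| / 3)) - |s| * a := by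
        linarith [exp_sub_one_sub_le_of_abs_lt_three hs3]
    _ = -a ^ 2 / (2 + 2 * a / 3) := by
        rw [← sq_abs, hs]; field_simp; ring

lemma exp_mul_indicator_one {χ : Type*} {I : Set χ} (t : ℝ) (x : χ) :
    exp (t * I.indicator 1 x) = 1 + I.indicator (fun _ => exp t - 1) x := by
  by_cases hx : x ∈ I <;> simp [hx]

section EmpiricalCount

variable {χ ι : Type*} [MeasurableSpace χ] [Fintype ι] {μ : Measure χ} [IsProbabilityMeasure μ]
  {I : Set χ}

lemma mgf_indicator_one (hI : MeasurableSet I) (t : ℝ) :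
    mgf (I.indicator 1) μ t = 1 + μ.real I * (exp t - 1) := by
  simp only [mgf, exp_mul_indicator_one]
  rw [integral_add (integrable_const 1) ((integrable_const _).indicator hI),
    integral_indicator_const _ hI]
  simp [mul_comm]

lemma mgf_sum_indicator_le (hI : MeasurableSet I) (t : ℝ) :
    mgf (fun X : ι → χ => ∑ i, I.indicator 1 (X i)) (Measure.pi fun _ => μ) t ≤
      exp (Fintype.card ι * μ.real I * (exp t - 1)) := by
  simp only [mgf, mul_sum, exp_sum]
  rw [integral_fintype_prod_eq_pow (fun y => exp (t * I.indicator 1 y)), ← mgf,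
    mgf_indicator_one hI, mul_assoc, exp_nat_mul]
  have hmgf_nonneg : 0 ≤ 1 + μ.real I * (exp t - 1) := by
    rw [← mgf_indicator_one hI]; exact mgf_nonneg
  gcongr
  linarith [add_one_le_exp (μ.real I * (exp t - 1))]

lemma integrable_exp_mul_sum_indicator (hI : MeasurableSet I) (t : ℝ) :
    Integrable (fun X : ι → χ => exp (t * ∑ i, I.indicator 1 (X i))) (Measure.pi fun _ => μ) := by
  simp only [mul_sum, exp_sum]
  refine Integrable.fintype_prod (f := fun _ y => exp (t * I.indicator 1 y)) (μ := fun _ => μ)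
    fun _ => ?_
  simp only [exp_mul_indicator_one]
  exact (integrable_const 1).add ((integrable_const _).indicator hI)

lemma measureReal_pi_le_sum_indicator_le (hI : MeasurableSet I) {a : ℝ} (ha : 0 < a) :
    (Measure.pi fun _ : ι => μ).real
        {X | Fintype.card ι * μ.real I * (1 + a) ≤ ∑ i, I.indicator 1 (X i)} ≤
      exp (-(Fintype.card ι * μ.real I * a ^ 2) / (2 + 2 * a / 3)) := by
  set l := 3 * a / (3 + a)
  have hl : 0 < l := by positivity
  set Np := Fintype.card ι * μ.real I
  have hNp : 0 ≤ Np := by positivity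
  calc _ ≤ exp (-l * (Np * (1 + a))) * mgf (fun X : ι → χ => ∑ i, I.indicator 1 (X i))
          (Measure.pi fun _ => μ) l :=
        measure_ge_le_exp_mul_mgf _ hl.le (integrable_exp_mul_sum_indicator hI l)
    _ ≤ exp (-l * (Np * (1 + a))) * exp (Np * (exp l - 1)) := by
        gcongr; exact mgf_sum_indicator_le hI l
    _ = exp (Np * (exp l - 1 - l - |l| * a)) := by
        rw [← exp_add, abs_of_pos hl]; ring_nf
    _ ≤ exp (Np * (-a ^ 2 / (2 + 2 * a / 3))) := by
        gcongr; exact exp_sub_one_sub_sub_abs_mul_le ha (abs_of_pos hl)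
    _ = _ := by ring_nf

lemma measureReal_pi_sum_indicator_le_le (hI : MeasurableSet I) {a : ℝ} (ha : 0 < a) :
    (Measure.pi fun _ : ι => μ).real
        {X | ∑ i, I.indicator 1 (X i) ≤ Fintype.card ι * μ.real I * (1 - a)} ≤
      exp (-(Fintype.card ι * μ.real I * a ^ 2) / (2 + 2 * a / 3)) := by
  set l := 3 * a / (3 + a)
  have hl : 0 < l := by positivity
  set Np := Fintype.card ι * μ.real I
  have hNp : 0 ≤ Np := by positivity
  calc _ ≤ exp (-(-l) * (Np * (1 - a))) * mgf (fun X : ι → χ => ∑ i, I.indicator 1 (X i))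
          (Measure.pi fun _ => μ) (-l) :=
        measure_le_le_exp_mul_mgf _ (by linarith) (integrable_exp_mul_sum_indicator hI (-l))
    _ ≤ exp (-(-l) * (Np * (1 - a))) * exp (Np * (exp (-l) - 1)) := by
        gcongr; exact mgf_sum_indicator_le hI (-l)
    _ = exp (Np * (exp (-l) - 1 - (-l) - |-l| * a)) := by
        rw [← exp_add, abs_neg, abs_of_pos hl]; ring_nf
    _ ≤ exp (Np * (-a ^ 2 / (2 + 2 * a / 3))) := by
        gcongr; exact exp_sub_one_sub_sub_abs_mul_le ha (by rw [abs_neg, abs_of_pos hl])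
    _ = _ := by ring_nf

lemma measureReal_pi_lt_abs_sum_indicator_div_sub_one_le [Nonempty ι] (hI : MeasurableSet I)
    (hp : 0 < μ.real I) {a : ℝ} (ha : 0 < a) :
    (Measure.pi fun _ : ι => μ).real
        {X | a < |(∑ i, I.indicator 1 (X i)) / Fintype.card ι / μ.real I - 1|} ≤
      2 * exp (-(Fintype.card ι * μ.real I * a ^ 2) / (2 + 2 * a / 3)) := by
  have hNp : 0 < Fintype.card ι * μ.real I := by positivity
  have hsub : {X : ι → χ | a < |(∑ i, I.indicator 1 (X i)) / Fintype.card ι / μ.real I - 1|} ⊆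
      {X | Fintype.card ι * μ.real I * (1 + a) ≤ ∑ i, I.indicator 1 (X i)} ∪
        {X | ∑ i, I.indicator 1 (X i) ≤ Fintype.card ι * μ.real I * (1 - a)} := by
    intro X hX
    simp only [Set.mem_ofPred_eq, div_div, lt_abs] at hX
    rcases hX with hX | hX
    · exact Or.inl ((lt_div_iff₀' hNp).1 (by linarith)).le
    · exact Or.inr ((div_lt_iff₀' hNp).1 (by linarith)).le
  calc _ ≤ _ := measureReal_mono hsub
    _ ≤ _ := measureReal_union_le _ _
    _ ≤ _ := by
        rw [two_mul]
        exact add_le_add (measureReal_pi_le_sum_indicator_le hI ha)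
          (measureReal_pi_sum_indicator_le_le hI ha)

end EmpiricalCount

section UnionBound

variable {α β : Type*} [MeasurableSpace α] {ν : Measure α} [IsProbabilityMeasure ν]

lemma one_sub_card_mul_le_measureReal_forall (s : Finset β) (P : β → α → Prop) {b : ℝ}
    (h : ∀ j ∈ s, ν.real {x | ¬ P j x} ≤ b) :
    1 - #s * b ≤ ν.real {x | ∀ j ∈ s, P j x} := by
  have hcompl : {x | ∀ j ∈ s, P j x}ᶜ = ⋃ j ∈ s, {x | ¬ P j x} := by
    ext x; simp
  have hbad : ν.real {x | ∀ j ∈ s, P j x}ᶜ ≤ #s * b := by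
    rw [hcompl]
    calc _ ≤ ∑ j ∈ s, ν.real {x | ¬ P j x} := measureReal_biUnion_finset_le s _
      _ ≤ ∑ _j ∈ s, b := sum_le_sum h
      _ = #s * b := by rw [sum_const, nsmul_eq_mul]
  have hsplit : 1 ≤ ν.real {x | ∀ j ∈ s, P j x} + ν.real {x | ∀ j ∈ s, P j x}ᶜ := by
    rw [← probReal_univ (μ := ν), ← Set.union_compl_self {x | ∀ j ∈ s, P j x}]
    exact measureReal_union_le _ _
  linarith

lemma card_mul_le_one_of_pairwiseDisjoint {𝒥 : Finset (Set α)}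
    (hmeas : ∀ I ∈ 𝒥, MeasurableSet I) (hdisj : (𝒥 : Set (Set α)).PairwiseDisjoint id) {r : ℝ}
    (hr : ∀ I ∈ 𝒥, r ≤ ν.real I) :
    #𝒥 * r ≤ 1 := by
  calc #𝒥 * r = ∑ _I ∈ 𝒥, r := by rw [sum_const, nsmul_eq_mul]
    _ ≤ ∑ I ∈ 𝒥, ν.real I := sum_le_sum hr
    _ = ν.real (⋃ I ∈ 𝒥, I) := (measureReal_biUnion_finset hdisj hmeas).symm
    _ ≤ 1 := measureReal_le_one

end UnionBound

lemma mul_rpow_neg_div_add_two_mul_sq_rpow_neg_inv {N D : ℝ} (hN : 0 < N) (hD : D + 2 ≠ 0) :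
    N * N ^ (-(D / (D + 2))) * (N ^ (-(1 / (D + 2)))) ^ 2 = 1 := by
  rw [← rpow_natCast, ← rpow_mul hN.le, mul_assoc, ← rpow_add hN]
  nth_rw 1 [← rpow_one N]
  rw [← rpow_add hN]
  convert rpow_zero N using 2
  field_simp
  ring

lemma sq_le_mul_mul_sq_of_one_div_mul_rpow_le {N C D p τ : ℝ} (hN : 0 < N) (hC : 0 < C)
    (hD : D + 2 ≠ 0) (hp : 1 / C * N ^ (-(D / (D + 2))) ≤ p) :
    τ ^ 2 ≤ N * p * (√C * N ^ (-(1 / (D + 2))) * τ) ^ 2 := by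
  calc τ ^ 2 = (N * N ^ (-(D / (D + 2))) * (N ^ (-(1 / (D + 2)))) ^ 2) * (√C ^ 2 / C) * τ ^ 2 := by
        rw [mul_rpow_neg_div_add_two_mul_sq_rpow_neg_inv hN hD, sq_sqrt hC.le, div_self hC.ne']
        ring
    _ = N * (1 / C * N ^ (-(D / (D + 2)))) * (√C * N ^ (-(1 / (D + 2))) * τ) ^ 2 := by ring
    _ ≤ N * p * (√C * N ^ (-(1 / (D + 2))) * τ) ^ 2 := by gcongr

lemma le_mul_of_mul_one_div_mul_rpow_le_one {k N C D : ℝ} (hN : 1 ≤ N) (hC : 0 < C)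
    (hD : 0 ≤ D + 2) (h : k * (1 / C * N ^ (-(D / (D + 2)))) ≤ 1) :
    k ≤ C * N := by
  have hND : N ^ (D / (D + 2)) ≤ N :=
    (rpow_le_rpow_of_exponent_le hN (div_le_one_of_le₀ (by linarith) hD)).trans_eq (rpow_one N)
  calc k ≤ 1 / (1 / C * N ^ (-(D / (D + 2)))) := by
        rwa [le_div_iff₀ (by positivity)]
    _ = C * N ^ (D / (D + 2)) := by rw [rpow_neg (by positivity)]; field_simp
    _ ≤ C * N := by gcongr

/-- Concentration of the empirical measure: given a finite collection `𝒥` of pairwise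
disjoint measurable sets each of measure at least `(1/C) * n^(-D/(D+2))`, with probability
at least `1 - 2*C*n*exp(-τ²/(2 + τ√C))` over an i.i.d. sample `X₁, …, Xₙ ~ μ`, every
`I ∈ 𝒥` satisfies `|μ_X(I)/μ(I) - 1| ≤ √C * n^(-1/(D+2)) * τ`, where `μ_X` denotes the
empirical measure of the sample. -/
theorem stmt1
    {χ : Type*} [MeasurableSpace χ] (μ : Measure χ) [IsProbabilityMeasure μ]
    (n : ℕ) (hn : 0 < n) (C D : ℝ) (hC : 1 ≤ C) (hD : 0 < D)
    (𝒥 : Finset (Set χ))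
    (hmeas : ∀ I ∈ 𝒥, MeasurableSet I)
    (hdisj : (𝒥 : Set (Set χ)).PairwiseDisjoint id)
    (hlb : ∀ I ∈ 𝒥, ENNReal.ofReal ((1 / C) * (n : ℝ) ^ (-(D / (D + 2)))) ≤ μ I)
    (τ : ℝ) (hτ : 0 < τ) :
    ENNReal.ofReal (1 - 2 * C * n * Real.exp (-(τ ^ 2) / (2 + τ * Real.sqrt C))) ≤
      Measure.pi (fun _ : Fin n => μ)
        {X : Fin n → χ | ∀ I ∈ 𝒥,
          |((∑ i, Set.indicator I (fun _ => (1 : ℝ)) (X i)) / n) / (μ I).toReal - 1| ≤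
            Real.sqrt C * (n : ℝ) ^ (-(1 / (D + 2))) * τ} := by
  have : Nonempty (Fin n) := ⟨⟨0, hn⟩⟩
  have hN : (1 : ℝ) ≤ n := by exact_mod_cast hn
  have hC0 : 0 < C := by linarith
  have hp : ∀ I ∈ 𝒥, 1 / C * (n : ℝ) ^ (-(D / (D + 2))) ≤ μ.real I := fun I hI =>
    (ENNReal.ofReal_le_iff_le_toReal (measure_ne_top μ I)).1 (hlb I hI)
  have hcard : (#𝒥 : ℝ) ≤ C * n := le_mul_of_mul_one_div_mul_rpow_le_one hN hC0 (by linarith)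
    (card_mul_le_one_of_pairwiseDisjoint hmeas hdisj hp)
  have ha_le : √C * (n : ℝ) ^ (-(1 / (D + 2))) * τ ≤ τ * √C := by
    have : (n : ℝ) ^ (-(1 / (D + 2))) ≤ 1 :=
      rpow_le_one_of_one_le_of_nonpos hN (neg_nonpos.2 (by positivity))
    calc _ ≤ √C * 1 * τ := by gcongr
      _ = τ * √C := by ring
  set a := √C * (n : ℝ) ^ (-(1 / (D + 2))) * τ
  have ha : 0 < a := by positivity
  have htail : ∀ I ∈ 𝒥, (Measure.pi fun _ : Fin n => μ).real
      {X | ¬ |((∑ i, Set.indicator I (fun _ => (1 : ℝ)) (X i)) / n) / (μ I).toReal - 1| ≤ a} ≤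
      2 * exp (-(τ ^ 2) / (2 + τ * √C)) := by
    intro I hI
    have hpos : 0 < μ.real I := (by positivity : (0 : ℝ) < 1 / C * _).trans_le (hp I hI)
    have h := measureReal_pi_lt_abs_sum_indicator_div_sub_one_le (ι := Fin n) (hmeas I hI) hpos ha
    rw [Fintype.card_fin] at h
    simp only [not_le]
    refine h.trans ?_
    gcongr 2 * exp ?_
    rw [neg_div, neg_div, neg_le_neg_iff]
    exact div_le_div₀ (by positivity)
      (sq_le_mul_mul_sq_of_one_div_mul_rpow_le (by positivity) hC0 (by positivity) (hp I hI))
      (by positivity) (by linarith)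
  refine ENNReal.ofReal_le_of_le_toReal ?_
  calc 1 - 2 * C * n * exp (-(τ ^ 2) / (2 + τ * √C))
      ≤ 1 - #𝒥 * (2 * exp (-(τ ^ 2) / (2 + τ * √C))) := by
        have := exp_pos (-(τ ^ 2) / (2 + τ * √C)); nlinarith
    _ ≤ _ := one_sub_card_mul_le_measureReal_forall 𝒥 _ htail
end

section
/- Let (χ, μ) be a probability space and Logit: χ × χ → ℝ a bounded measurable function, with attention kernel Att(u, z) = exp(Logit(u, z)) / ∫_χ exp(Logit(u, z')) dμ(z'). Suppose x, y ∈ χ and L, r ≥ 0 satisfy |Logit(x, z) − Logit(y, z)| ≤ L·r for every z ∈ χ. Then for every z ∈ χ: (i) exp(Logit(x, z))/exp(Logit(y, z)) ∈ [e^{−Lr}, e^{Lr}]; (ii) Att(x, z)/Att(y, z) ∈ [e^{−2Lr}, e^{2Lr}]; and (iii) if additionaly L·r ≤ 1/2, then |Att(x, z)/Att(y, z) − 1| ≤ 4·L·r. -/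
/-!
Shifting the logits by at most `c` multiplies each numerator `exp (Logit u z)` by a factor in
`[e^{-c}, e^{c}]`, and hence, by monotonicity of the integral, also the normalising integral.
The attention ratio is the product of these two ratios, so it lies in `[e^{-2c}, e^{2c}]`;
for `2c ≤ 1` the bound `|e^s - 1| ≤ 2|s|`, valid for `|s| ≤ 1`, then gives
`|Att(x,z)/Att(y,z) - 1| ≤ 4c`.
-/

open MeasureTheory Real Set

lemma exp_div_exp_mem_Icc {a b c : ℝ} (h : |a - b| ≤ c) :
    exp a / exp b ∈ Icc (exp (-c)) (exp c) := by
  rw [← exp_sub]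
  obtain ⟨hlo, hhi⟩ := abs_le.mp h
  exact ⟨exp_le_exp.mpr (by linarith), exp_le_exp.mpr hhi⟩

lemma mul_mem_Icc_exp {s t c d : ℝ} (hs : s ∈ Icc (exp (-c)) (exp c))
    (ht : t ∈ Icc (exp (-d)) (exp d)) : s * t ∈ Icc (exp (-(c + d))) (exp (c + d)) := by
  rw [neg_add, exp_add, exp_add]
  exact ⟨mul_le_mul hs.1 ht.1 (exp_pos _).le (hs.1.trans' (exp_pos _).le),
    mul_le_mul hs.2 ht.2 (ht.1.trans' (exp_pos _).le) (exp_pos _).le⟩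

lemma abs_sub_one_le_of_mem_Icc_exp {s t : ℝ} (hs : 0 ≤ s) (hs1 : s ≤ 1)
    (ht : t ∈ Icc (exp (-s)) (exp s)) : |t - 1| ≤ 2 * s := by
  have hup := (abs_le.mp (abs_exp_sub_one_le (x := s) (by rwa [abs_of_nonneg hs]))).2
  have hlo := (abs_le.mp (abs_exp_sub_one_le (x := -s) (by rwa [abs_neg, abs_of_nonneg hs]))).1
  rw [abs_neg, abs_of_nonneg hs] at hlo
  rw [abs_of_nonneg hs] at hup
  exact abs_le.mpr ⟨by linarith [ht.1], by linarith [ht.2]⟩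

section Softmax

variable {χ : Type*} [MeasurableSpace χ] {μ : Measure χ}

lemma integrable_exp_of_le [IsFiniteMeasure μ] {f : χ → ℝ} (hf : Measurable f) {M : ℝ}
    (hM : ∀ z, f z ≤ M) : Integrable (fun z => exp (f z)) μ :=
  Integrable.of_bound hf.exp.aestronglyMeasurable (exp M) <| ae_of_all _ fun z => by
    rw [norm_of_nonneg (exp_pos _).le]
    exact exp_le_exp.mpr (hM z)

lemma integral_exp_le_exp_mul_integral_exp {f g : χ → ℝ}
    (hf : Integrable (fun z => exp (f z)) μ) (hg : Integrable (fun z => exp (g z)) μ) {c : ℝ}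
    (h : ∀ z, f z ≤ g z + c) : ∫ z, exp (f z) ∂μ ≤ exp c * ∫ z, exp (g z) ∂μ := by
  rw [← integral_const_mul]
  refine integral_mono hf (hg.const_mul _) fun z => ?_
  rw [← exp_add]
  exact exp_le_exp.mpr (by linarith [h z])

lemma integral_exp_div_integral_exp_mem_Icc [NeZero μ] {f g : χ → ℝ}
    (hf : Integrable (fun z => exp (f z)) μ) (hg : Integrable (fun z => exp (g z)) μ) {c : ℝ}
    (h : ∀ z, |f z - g z| ≤ c) :
    (∫ z, exp (g z) ∂μ) / ∫ z, exp (f z) ∂μ ∈ Icc (exp (-c)) (exp c) := by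
  have hfpos := integral_exp_pos hf
  have hfg := integral_exp_le_exp_mul_integral_exp hf hg (c := c) fun z => by
    linarith [(abs_le.mp (h z)).2]
  have hgf := integral_exp_le_exp_mul_integral_exp hg hf (c := c) fun z => by
    linarith [(abs_le.mp (h z)).1]
  refine ⟨(le_div_iff₀ hfpos).mpr ?_, (div_le_iff₀ hfpos).mpr hgf⟩
  rwa [exp_neg, inv_mul_le_iff₀ (exp_pos c)]

noncomputable def softmax (μ : Measure χ) (f : χ → ℝ) (z : χ) : ℝ :=
  exp (f z) / ∫ z', exp (f z') ∂μ

lemma softmax_div_softmax (f g : χ → ℝ) (z : χ) :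
    softmax μ f z / softmax μ g z
      = exp (f z) / exp (g z) * ((∫ z', exp (g z') ∂μ) / ∫ z', exp (f z') ∂μ) := by
  rw [softmax, softmax, div_div_div_comm, div_div_eq_mul_div, mul_div_assoc]

lemma softmax_div_softmax_mem_Icc [NeZero μ] {f g : χ → ℝ}
    (hf : Integrable (fun z => exp (f z)) μ) (hg : Integrable (fun z => exp (g z)) μ) {c : ℝ}
    (h : ∀ z, |f z - g z| ≤ c) (z : χ) :
    softmax μ f z / softmax μ g z ∈ Icc (exp (-(2 * c))) (exp (2 * c)) := by
  rw [softmax_div_softmax, two_mul]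
  exact mul_mem_Icc_exp (exp_div_exp_mem_Icc (h z)) (integral_exp_div_integral_exp_mem_Icc hf hg h)

end Softmax

theorem stmt2_general
    {χ : Type*} [MeasurableSpace χ] (μ : Measure χ) [IsProbabilityMeasure μ]
    (Logit : χ → χ → ℝ)
    (hmeas : Measurable fun q : χ × χ => Logit q.1 q.2)
    (hbdd : ∃ M : ℝ, ∀ u z, |Logit u z| ≤ M)
    (x y : χ) (L r : ℝ)
    (hclose : ∀ z, |Logit x z - Logit y z| ≤ L * r) :
    ∀ z : χ,
      (Real.exp (Logit x z) / Real.exp (Logit y z) ∈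
        Set.Icc (Real.exp (-(L * r))) (Real.exp (L * r))) ∧
      ((Real.exp (Logit x z) / ∫ z', Real.exp (Logit x z') ∂μ) /
         (Real.exp (Logit y z) / ∫ z', Real.exp (Logit y z') ∂μ) ∈
        Set.Icc (Real.exp (-(2 * L * r))) (Real.exp (2 * L * r))) ∧
      (L * r ≤ 1 / 2 →
        |(Real.exp (Logit x z) / ∫ z', Real.exp (Logit x z') ∂μ) /
           (Real.exp (Logit y z) / ∫ z', Real.exp (Logit y z') ∂μ) - 1| ≤ 4 * (L * r)) := by
  obtain ⟨M, hM⟩ := hbdd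
  have hint : ∀ u, Integrable (fun z => exp (Logit u z)) μ := fun u =>
    integrable_exp_of_le (hmeas.comp measurable_prodMk_left) fun z => (le_abs_self _).trans (hM u z)
  intro z
  have hratio : softmax μ (Logit x) z / softmax μ (Logit y) z
      ∈ Icc (exp (-(2 * (L * r)))) (exp (2 * (L * r))) :=
    softmax_div_softmax_mem_Icc (hint x) (hint y) hclose z
  rw [← mul_assoc] at hratio
  refine ⟨exp_div_exp_mem_Icc (hclose z), hratio, fun hsmall => ?_⟩
  have hLr : 0 ≤ L * r := (abs_nonneg _).trans (hclose z)
  rw [show 4 * (L * r) = 2 * (2 * L * r) by ring]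
  exact abs_sub_one_le_of_mem_Icc_exp (by linarith) (by linarith) hratio

/-- Comparing attention at two close points: if the logits at `x` and `y` differ by at
most `L*r` uniformly, then the ratio of exponentials lies in `[e^(-Lr), e^(Lr)]`, the
ratio of softmax attention kernels lies in `[e^(-2Lr), e^(2Lr)]`, and (when `L*r ≤ 1/2`)
the attention ratio is within `4*L*r` of `1`. -/
theorem stmt2
    {χ : Type*} [MeasurableSpace χ] (μ : Measure χ) [IsProbabilityMeasure μ]
    (Logit : χ → χ → ℝ)
    (hmeas : Measurable fun q : χ × χ => Logit q.1 q.2)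
    (hbdd : ∃ M : ℝ, ∀ u z, |Logit u z| ≤ M)
    (x y : χ) (L r : ℝ) (hL : 0 ≤ L) (hr : 0 ≤ r)
    (hclose : ∀ z, |Logit x z - Logit y z| ≤ L * r) :
    ∀ z : χ,
      (Real.exp (Logit x z) / Real.exp (Logit y z) ∈
        Set.Icc (Real.exp (-(L * r))) (Real.exp (L * r))) ∧
      ((Real.exp (Logit x z) / ∫ z', Real.exp (Logit x z') ∂μ) /
         (Real.exp (Logit y z) / ∫ z', Real.exp (Logit y z') ∂μ) ∈
        Set.Icc (Real.exp (-(2 * L * r))) (Real.exp (2 * L * r))) ∧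
      (L * r ≤ 1 / 2 →
        |(Real.exp (Logit x z) / ∫ z', Real.exp (Logit x z') ∂μ) /
           (Real.exp (Logit y z) / ∫ z', Real.exp (Logit y z') ∂μ) - 1| ≤ 4 * (L * r)) :=
  stmt2_general μ Logit hmeas hbdd x y L r hclose
end

section
/- Let (χ, dist, μ) be a metric space with a Borel probability measure, and adopt the one-layer attention setup: logit: ℝ^{d_h} × ℝ^{d_h} × ℝ^{d_p} → ℝ is Lipschitz with constant L_logit (with respect to the sum of the Euclidean norms of the three arguments), v: ℝ^{d_h} → ℝ^{d_h} is Lipschitz with constant L_v and v(0) = 0, p: χ × χ → ℝ^{d_p} is bounded measurable and Lipschitz with constant L_p in each argument, h: χ → ℝ^{d_h} is bounded measurable, Logit_h(x,y) = logit(h(x), h(y), p(x,y)), Att_h(x,y) = exp(Logit_h(x,y)) / ∫_χ exp(Logit_h(x,z)) dμ(z), and next(h)(x) = ∫_χ Att_h(x,y)·v(h(y)) dμ(y). Let r > 0 and ℓ ≥ LocLip_r(h), and assume (ℓ + L_p)·r ≤ 1/(2·L_logit). Then: (i) for all x, y ∈ χ with dist(x, y) ≤ r, ‖next(h)(x) −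 next(h)(y)‖₂ ≤ 4·L_logit·L_v·‖h‖_∞·(ℓ + L_p)·r; and (ii) sup_x ‖next(h)(x)‖₂ ≤ L_v·‖h‖_∞. -/
/-!
The attention output `next(h)(x)` is the mean of `v ∘ h` under the softmax weights
`exp (s_x z) / ∫ exp s_x dμ` of the logits `s_x z = logit (h x) (h z) (p x z)`. These weights
form a probability density, so the mean has norm at most `sup ‖v ∘ h‖ ≤ L_v ‖h‖_∞`.
Moving `x` to `y` with `dist x y ≤ r` changes every logit by at most
`d = L_logit (ℓ + L_p) r ≤ 1/2`, hence every weight by a factor in `[e^{-2d}, e^{2d}]`, so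
pointwise by at most `(e^{2d} - 1) ≤ 4d` times the weight; integrating gives the local
Lipschitz bound.
-/

open MeasureTheory Real

lemma exp_two_mul_sub_one_le {d : ℝ} (hd0 : 0 ≤ d) (hd : 2 * d ≤ 1) : exp (2 * d) - 1 ≤ 4 * d := by
  have h2d : |2 * d| = 2 * d := abs_of_nonneg (by linarith)
  calc exp (2 * d) - 1 ≤ |exp (2 * d) - 1| := le_abs_self _
    _ ≤ 2 * |2 * d| := abs_exp_sub_one_le (by rwa [h2d])
    _ = 4 * d := by rw [h2d]; ring

section Softmax

variable {α E : Type*} [MeasurableSpace α] {μ : Measure α}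
  [NormedAddCommGroup E] [NormedSpace ℝ E] {s t : α → ℝ} {g : α → E} {C d : ℝ}

noncomputable def softmaxWeight (μ : Measure α) (s : α → ℝ) (z : α) : ℝ :=
  exp (s z) / ∫ z', exp (s z') ∂μ

noncomputable def softmaxMean (μ : Measure α) (s : α → ℝ) (g : α → E) : E :=
  ∫ z, softmaxWeight μ s z • g z ∂μ

lemma softmaxWeight_nonneg (z : α) : 0 ≤ softmaxWeight μ s z :=
  div_nonneg (exp_pos _).le (integral_nonneg fun _ => (exp_pos _).le)

lemma integrable_softmaxWeight (hs : Integrable (fun z => exp (s z)) μ) :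
    Integrable (softmaxWeight μ s) μ :=
  hs.div_const _

lemma integral_softmaxWeight [NeZero μ] (hs : Integrable (fun z => exp (s z)) μ) :
    ∫ z, softmaxWeight μ s z ∂μ = 1 := by
  unfold softmaxWeight
  rw [integral_div]
  exact div_self (integral_exp_pos hs).ne'

lemma integrable_softmaxWeight_smul (hs : Integrable (fun z => exp (s z)) μ)
    (hg : AEStronglyMeasurable g μ) (hgC : ∀ z, ‖g z‖ ≤ C) :
    Integrable (fun z => softmaxWeight μ s z • g z) μ := by
  refine ((integrable_softmaxWeight hs).mul_const C).mono'
    ((integrable_softmaxWeight hs).aestronglyMeasurable.smul hg) (ae_of_all _ fun z => ?_)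
  rw [norm_smul, norm_of_nonneg (softmaxWeight_nonneg z)]
  exact mul_le_mul_of_nonneg_left (hgC z) (softmaxWeight_nonneg z)

lemma norm_softmaxMean_le [NeZero μ] (hs : Integrable (fun z => exp (s z)) μ)
    (hgC : ∀ z, ‖g z‖ ≤ C) : ‖softmaxMean μ s g‖ ≤ C := by
  calc ‖softmaxMean μ s g‖ ≤ ∫ z, softmaxWeight μ s z * C ∂μ := by
        refine norm_integral_le_of_norm_le ((integrable_softmaxWeight hs).mul_const C)
          (ae_of_all _ fun z => ?_)
        rw [norm_smul, norm_of_nonneg (softmaxWeight_nonneg z)]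
        exact mul_le_mul_of_nonneg_left (hgC z) (softmaxWeight_nonneg z)
    _ = C := by rw [integral_mul_const, integral_softmaxWeight hs, one_mul]

lemma softmaxWeight_le_exp_mul [NeZero μ] (hs : Integrable (fun z => exp (s z)) μ)
    (ht : Integrable (fun z => exp (t z)) μ) (hst : ∀ z, |s z - t z| ≤ d) (z : α) :
    softmaxWeight μ s z ≤ exp (2 * d) * softmaxWeight μ t z := by
  have hZs := integral_exp_pos hs
  have hZt := integral_exp_pos ht
  have hZ : ∫ z, exp (t z) ∂μ ≤ exp d * ∫ z, exp (s z) ∂μ := by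
    rw [← integral_const_mul]
    refine integral_mono ht (hs.const_mul _) fun z => ?_
    rw [← exp_add]
    exact exp_le_exp.2 (by linarith [(abs_le.1 (hst z)).1])
  have hexp : exp (s z) ≤ exp d * exp (t z) := by
    rw [← exp_add]
    exact exp_le_exp.2 (by linarith [(abs_le.1 (hst z)).2])
  rw [softmaxWeight, softmaxWeight, div_le_iff₀ hZs]
  calc exp (s z) ≤ exp d * exp (t z) := hexp
    _ ≤ exp d * exp (t z) * (exp d * (∫ z, exp (s z) ∂μ) / ∫ z, exp (t z) ∂μ) :=
        le_mul_of_one_le_right (by positivity) ((one_le_div hZt).2 hZ)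
    _ = _ := by rw [two_mul, exp_add]; ring

lemma abs_softmaxWeight_sub_le [NeZero μ] (hs : Integrable (fun z => exp (s z)) μ)
    (ht : Integrable (fun z => exp (t z)) μ) (hst : ∀ z, |s z - t z| ≤ d) (z : α) :
    |softmaxWeight μ s z - softmaxWeight μ t z| ≤ (exp (2 * d) - 1) * softmaxWeight μ t z := by
  have hts : ∀ z, |t z - s z| ≤ d := fun z => abs_sub_comm (s z) (t z) ▸ hst z
  have hup := softmaxWeight_le_exp_mul hs ht hst z
  have hlow := softmaxWeight_le_exp_mul ht hs hts z
  have he : 1 ≤ exp (2 * d) := one_le_exp (by linarith [(abs_nonneg _).trans (hst z)])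
  have hws := softmaxWeight_nonneg (μ := μ) (s := s) z
  have hwt := softmaxWeight_nonneg (μ := μ) (s := t) z
  rw [abs_sub_le_iff]
  constructor
  · linarith
  · nlinarith [mul_nonneg (sq_nonneg (exp (2 * d) - 1)) hwt]

lemma norm_softmaxMean_sub_le [NeZero μ] (hs : Integrable (fun z => exp (s z)) μ)
    (ht : Integrable (fun z => exp (t z)) μ) (hst : ∀ z, |s z - t z| ≤ d)
    (hg : AEStronglyMeasurable g μ) (hgC : ∀ z, ‖g z‖ ≤ C) :
    ‖softmaxMean μ s g - softmaxMean μ t g‖ ≤ (exp (2 * d) - 1) * C := by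
  rw [softmaxMean, softmaxMean, ← integral_sub (integrable_softmaxWeight_smul hs hg hgC)
    (integrable_softmaxWeight_smul ht hg hgC)]
  calc _ ≤ ∫ z, (exp (2 * d) - 1) * softmaxWeight μ t z * C ∂μ := by
        refine norm_integral_le_of_norm_le
          (((integrable_softmaxWeight ht).const_mul _).mul_const C) (ae_of_all _ fun z => ?_)
        rw [← sub_smul, norm_smul, norm_eq_abs]
        exact mul_le_mul (abs_softmaxWeight_sub_le hs ht hst z) (hgC z) (norm_nonneg _)
          ((abs_nonneg _).trans (abs_softmaxWeight_sub_le hs ht hst z))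
    _ = (exp (2 * d) - 1) * C := by
        rw [integral_mul_const, integral_const_mul, integral_softmaxWeight ht, mul_one]

lemma norm_softmaxMean_sub_le_four_mul [NeZero μ] (hs : Integrable (fun z => exp (s z)) μ)
    (ht : Integrable (fun z => exp (t z)) μ) (hst : ∀ z, |s z - t z| ≤ d) (hd : 2 * d ≤ 1)
    (hg : AEStronglyMeasurable g μ) (hgC : ∀ z, ‖g z‖ ≤ C) :
    ‖softmaxMean μ s g - softmaxMean μ t g‖ ≤ 4 * d * C := by
  obtain ⟨z⟩ := μ.nonempty_of_neZero
  calc _ ≤ (exp (2 * d) - 1) * C := norm_softmaxMean_sub_le hs ht hst hg hgC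
    _ ≤ 4 * d * C := mul_le_mul_of_nonneg_right
        (exp_two_mul_sub_one_le ((abs_nonneg _).trans (hst z)) hd) ((norm_nonneg _).trans (hgC z))

end Softmax

lemma integrable_exp_of_le_s3 {α : Type*} [MeasurableSpace α] {μ : Measure α} [IsFiniteMeasure μ]
    {s : α → ℝ} {B : ℝ} (hs : Measurable s) (hsB : ∀ z, s z ≤ B) :
    Integrable (fun z => exp (s z)) μ :=
  .of_bound (hs.exp.aestronglyMeasurable) (exp B) <| ae_of_all _ fun z => by
    rw [norm_of_nonneg (exp_pos _).le]
    exact exp_le_exp.2 (hsB z)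

lemma continuous_uncurry_of_abs_sub_le {E F G : Type*} [SeminormedAddCommGroup E]
    [SeminormedAddCommGroup F] [SeminormedAddCommGroup G] {f : E → F → G → ℝ} {L : ℝ}
    (hL : 0 ≤ L) (hf : ∀ a b c a' b' c', |f a b c - f a' b' c'| ≤
      L * (‖a - a'‖ + ‖b - b'‖ + ‖c - c'‖)) :
    Continuous fun q : E × F × G => f q.1 q.2.1 q.2.2 := by
  refine (LipschitzWith.of_dist_le' (K := 3 * L) fun q q' => ?_).continuous
  have h1 : ‖q.1 - q'.1‖ ≤ dist q q' := by
    rw [dist_eq_norm]; exact norm_fst_le (q - q')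
  have h2 : ‖q.2.1 - q'.2.1‖ ≤ dist q q' := by
    rw [dist_eq_norm]; exact (norm_fst_le (q - q').2).trans (norm_snd_le (q - q'))
  have h3 : ‖q.2.2 - q'.2.2‖ ≤ dist q q' := by
    rw [dist_eq_norm]; exact (norm_snd_le (q - q').2).trans (norm_snd_le (q - q'))
  rw [Real.dist_eq]
  calc _ ≤ L * (‖q.1 - q'.1‖ + ‖q.2.1 - q'.2.1‖ + ‖q.2.2 - q'.2.2‖) := hf _ _ _ _ _ _
    _ ≤ L * (3 * dist q q') := by gcongr; linarith
    _ = 3 * L * dist q q' := by ring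

lemma le_add_mul_norm_of_abs_sub_le {E F G : Type*} [SeminormedAddCommGroup E]
    [SeminormedAddCommGroup F] [SeminormedAddCommGroup G] {f : E → F → G → ℝ} {L : ℝ}
    (hf : ∀ a b c a' b' c', |f a b c - f a' b' c'| ≤ L * (‖a - a'‖ + ‖b - b'‖ + ‖c - c'‖))
    (a : E) (b : F) (c : G) : f a b c ≤ f 0 0 0 + L * (‖a‖ + ‖b‖ + ‖c‖) := by
  have := (abs_le.1 (hf a b c 0 0 0)).2
  simp only [sub_zero] at this
  linarith

lemma two_mul_mul_le_one_of_le_one_div {L a : ℝ} (hL : 0 ≤ L) (ha : a ≤ 1 / (2 * L)) :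
    2 * (L * a) ≤ 1 := by
  rcases hL.eq_or_lt with rfl | hL
  · simp
  · rw [le_div_iff₀ (by positivity)] at ha
    linarith

theorem stmt3_general
    {χ : Type*} [MetricSpace χ] [MeasurableSpace χ]
    (μ : Measure χ) [IsProbabilityMeasure μ]
    (dh dp : ℕ)
    (logit : EuclideanSpace ℝ (Fin dh) → EuclideanSpace ℝ (Fin dh) →
      EuclideanSpace ℝ (Fin dp) → ℝ)
    (v : EuclideanSpace ℝ (Fin dh) → EuclideanSpace ℝ (Fin dh))
    (p : χ → χ → EuclideanSpace ℝ (Fin dp))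
    (h : χ → EuclideanSpace ℝ (Fin dh))
    (Llogit Lv Lp ℓ r : ℝ)
    (hLlogit : 0 ≤ Llogit) (hLv : 0 ≤ Lv) (hLp : 0 ≤ Lp) (hℓ0 : 0 ≤ ℓ)
    (hlogit : ∀ a b c a' b' c', |logit a b c - logit a' b' c'| ≤
      Llogit * (‖a - a'‖ + ‖b - b'‖ + ‖c - c'‖))
    (hv : ∀ a b, ‖v a - v b‖ ≤ Lv * ‖a - b‖) (hv0 : v 0 = 0)
    (hpmeas : Measurable fun q : χ × χ => p q.1 q.2)
    (hpbdd : ∃ M : ℝ, ∀ x y, ‖p x y‖ ≤ M)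
    (hplip1 : ∀ x x' y, ‖p x y - p x' y‖ ≤ Lp * dist x x')
    (hhmeas : Measurable h)
    (hhbdd : ∃ M : ℝ, ∀ x, ‖h x‖ ≤ M)
    (hloclip : ∀ x y, dist x y ≤ r → ‖h x - h y‖ ≤ ℓ * dist x y)
    (hsmall : (ℓ + Lp) * r ≤ 1 / (2 * Llogit)) :
    (∀ x y : χ, dist x y ≤ r →
      ‖(∫ z, (Real.exp (logit (h x) (h z) (p x z)) /
            ∫ z', Real.exp (logit (h x) (h z') (p x z')) ∂μ) • v (h z) ∂μ) -
        (∫ z, (Real.exp (logit (h y) (h z) (p y z)) /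
            ∫ z', Real.exp (logit (h y) (h z') (p y z')) ∂μ) • v (h z) ∂μ)‖ ≤
        4 * Llogit * Lv * (⨆ x', ‖h x'‖) * (ℓ + Lp) * r) ∧
    (∀ x : χ,
      ‖∫ z, (Real.exp (logit (h x) (h z) (p x z)) /
          ∫ z', Real.exp (logit (h x) (h z') (p x z')) ∂μ) • v (h z) ∂μ‖ ≤
        Lv * ⨆ x', ‖h x'‖) := by
  obtain ⟨Mh, hMh⟩ := hhbdd
  obtain ⟨Mp, hMp⟩ := hpbdd
  set S := ⨆ x', ‖h x'‖
  have hS (z : χ) : ‖h z‖ ≤ S := le_ciSup ⟨Mh, by rintro _ ⟨x, rfl⟩; exact hMh x⟩ z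
  have hvLip : LipschitzWith (Real.toNNReal Lv) v :=
    .of_dist_le' fun a b => by simpa only [dist_eq_norm] using hv a b
  have hvh (z : χ) : ‖v (h z)‖ ≤ Lv * S := by
    simpa only [Real.coe_toNNReal _ hLv] using
      (hvLip.norm_le_mul hv0 (h z)).trans (mul_le_mul_of_nonneg_left (hS z) (NNReal.coe_nonneg _))
  have hint (x : χ) : Integrable (fun z => exp (logit (h x) (h z) (p x z))) μ :=
    integrable_exp_of_le_s3 (B := logit 0 0 0 + Llogit * (S + S + Mp))
      ((continuous_uncurry_of_abs_sub_le hLlogit hlogit).measurable.comp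
        (measurable_const.prodMk (hhmeas.prodMk (hpmeas.comp measurable_prodMk_left))))
      fun z => (le_add_mul_norm_of_abs_sub_le hlogit _ _ _).trans <| add_le_add le_rfl <|
        mul_le_mul_of_nonneg_left (by linarith [hS x, hS z, hMp x z]) hLlogit
  refine ⟨fun x y hxy => ?_, fun x => norm_softmaxMean_le (hint x) hvh⟩
  have hst (z : χ) : |logit (h x) (h z) (p x z) - logit (h y) (h z) (p y z)| ≤
      Llogit * ((ℓ + Lp) * r) := by
    calc _ ≤ Llogit * (‖h x - h y‖ + ‖p x z - p y z‖) := by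
          simpa using hlogit (h x) (h z) (p x z) (h y) (h z) (p y z)
      _ ≤ Llogit * ((ℓ + Lp) * dist x y) := by
          rw [add_mul]
          exact mul_le_mul_of_nonneg_left (add_le_add (hloclip x y hxy) (hplip1 x y z)) hLlogit
      _ ≤ _ := mul_le_mul_of_nonneg_left (mul_le_mul_of_nonneg_left hxy (by linarith)) hLlogit
  calc _ ≤ 4 * (Llogit * ((ℓ + Lp) * r)) * (Lv * S) :=
        norm_softmaxMean_sub_le_four_mul (hint x) (hint y) hst
          (two_mul_mul_le_one_of_le_one_div hLlogit hsmall)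
          (hvLip.continuous.measurable.comp hhmeas).aestronglyMeasurable hvh
    _ = _ := by ring

/-- One-layer local Lipschitz bound: for the attention layer
`next(h)(x) = ∫ Att_h(x,y) • v(h(y)) dμ(y)` with Lipschitz logit, value and positional
encoding functions, the output is locally Lipschitz with constant
`4·L_logit·L_v·‖h‖_∞·(ℓ + L_p)` on scale `r`, and its sup-norm is at most `L_v·‖h‖_∞`. -/
theorem stmt3
    {χ : Type*} [MetricSpace χ] [MeasurableSpace χ]
    (μ : Measure χ) [IsProbabilityMeasure μ]
    (dh dp : ℕ)
    (logit : EuclideanSpace ℝ (Fin dh) → EuclideanSpace ℝ (Fin dh) →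
      EuclideanSpace ℝ (Fin dp) → ℝ)
    (v : EuclideanSpace ℝ (Fin dh) → EuclideanSpace ℝ (Fin dh))
    (p : χ → χ → EuclideanSpace ℝ (Fin dp))
    (h : χ → EuclideanSpace ℝ (Fin dh))
    (Llogit Lv Lp ℓ r : ℝ)
    (hLlogit : 0 ≤ Llogit) (hLv : 0 ≤ Lv) (hLp : 0 ≤ Lp) (hℓ0 : 0 ≤ ℓ) (hr : 0 < r)
    (hlogit : ∀ a b c a' b' c', |logit a b c - logit a' b' c'| ≤
      Llogit * (‖a - a'‖ + ‖b - b'‖ + ‖c - c'‖))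
    (hv : ∀ a b, ‖v a - v b‖ ≤ Lv * ‖a - b‖) (hv0 : v 0 = 0)
    (hpmeas : Measurable fun q : χ × χ => p q.1 q.2)
    (hpbdd : ∃ M : ℝ, ∀ x y, ‖p x y‖ ≤ M)
    (hplip1 : ∀ x x' y, ‖p x y - p x' y‖ ≤ Lp * dist x x')
    (hplip2 : ∀ x y y', ‖p x y - p x y'‖ ≤ Lp * dist y y')
    (hhmeas : Measurable h)
    (hhbdd : ∃ M : ℝ, ∀ x, ‖h x‖ ≤ M)
    (hloclip : ∀ x y, dist x y ≤ r → ‖h x - h y‖ ≤ ℓ * dist x y)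
    (hsmall : (ℓ + Lp) * r ≤ 1 / (2 * Llogit)) :
    (∀ x y : χ, dist x y ≤ r →
      ‖(∫ z, (Real.exp (logit (h x) (h z) (p x z)) /
            ∫ z', Real.exp (logit (h x) (h z') (p x z')) ∂μ) • v (h z) ∂μ) -
        (∫ z, (Real.exp (logit (h y) (h z) (p y z)) /
            ∫ z', Real.exp (logit (h y) (h z') (p y z')) ∂μ) • v (h z) ∂μ)‖ ≤
        4 * Llogit * Lv * (⨆ x', ‖h x'‖) * (ℓ + Lp) * r) ∧
    (∀ x : χ,
      ‖∫ z, (Real.exp (logit (h x) (h z) (p x z)) /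
          ∫ z', Real.exp (logit (h x) (h z') (p x z')) ∂μ) • v (h z) ∂μ‖ ≤
        Lv * ⨆ x', ‖h x'‖) :=
  stmt3_general μ dh dp logit v p h Llogit Lv Lp ℓ r hLlogit hLv hLp hℓ0 hlogit hv hv0 hpmeas hpbdd
    hplip1 hhmeas hhbdd hloclip hsmall
end

section
/- Let L ≥ 10 and consider the two-point space χ = {−1, 1} with probability measure μ({−1}) = 1 − e^{−L} and μ({1}) = e^{−L}. Define the one-layer softmax aggregation with logits Logit(x, y) = L·|x − y| and identity value function: h(x) = (Σ_{y ∈ χ} e^{Logit(x,y)}·y·μ({y})) / (Σ_{y ∈ χ} e^{Logit(x,y)}·μ({y})), and the continuous output Θ(𝒯) = Σ_{x ∈ χ} h(x)·μ({x}). Let n = ⌈e^L⌉ and let X₁, …, Xₙ be i.i.d. samples from μ, with discrete output Θ(T) = (1/n)·Σ_{i=1}^n (Σ_{j=1}^n e^{L·|Xᵢ − Xⱼ|}·Xⱼ) / (Σ_{j=1}^n e^{L·|Xᵢ − Xⱼ|}). Then: (i) |Θ(𝒯) − 1| ≤ 5·e^{−L}; and (ii) with probability at least 1/(2e), every sample Xᵢ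 equals −1, in which case Θ(T) = −1 and hence |Θ(𝒯) − Θ(T)| ≥ 1. -/
open MeasureTheory

/-- Hidden state of the one-layer softmax aggregation on the two-point space
`{-1, 1}` with `μ({-1}) = 1 - e^{-L}`, `μ({1}) = e^{-L}`, logits `L·|x − y|` and
identity value function. -/
noncomputable def hcont (L x : ℝ) : ℝ :=
  (Real.exp (L * |x - (-1)|) * (-1) * (1 - Real.exp (-L)) +
      Real.exp (L * |x - 1|) * 1 * Real.exp (-L)) /
    (Real.exp (L * |x - (-1)|) * (1 - Real.exp (-L)) +
      Real.exp (L * |x - 1|) * Real.exp (-L))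

/-- Output of the model on the continuous two-point tokenset (mean pooling). -/
noncomputable def thetaCont (L : ℝ) : ℝ :=
  hcont L (-1) * (1 - Real.exp (-L)) + hcont L 1 * Real.exp (-L)

/-- Output of the model on a sampled tokenset `X₁, …, Xₙ` (empirical softmax attention
followed by mean pooling). -/
noncomputable def thetaDisc (L : ℝ) {n : ℕ} (X : Fin n → ℝ) : ℝ :=
  (1 / (n : ℝ)) * ∑ i, (∑ j, Real.exp (L * |X i - X j|) * X j) /
    (∑ j, Real.exp (L * |X i - X j|))

/-- The two-point measure `μ({-1}) = 1 - e^{-L}`, `μ({1}) = e^{-L}` on `ℝ`. -/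
noncomputable def muTwo (L : ℝ) : Measure ℝ :=
  ENNReal.ofReal (1 - Real.exp (-L)) • Measure.dirac (-1) +
    ENNReal.ofReal (Real.exp (-L)) • Measure.dirac 1

instance muTwo_isFiniteMeasure (L : ℝ) : IsFiniteMeasure (muTwo L) := by
  constructor
  simp [muTwo, Measure.dirac_apply]

/-- Part (i): the continuous output is within `5·e^{-L}` of `1`. -/
lemma thetaCont_close (L : ℝ) (hL : 10 ≤ L) : |thetaCont L - 1| ≤ 5 * Real.exp (-L) := by
  have hAE : Real.exp L * Real.exp (-L) = 1 := by
    rw [← Real.exp_add]; simp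
  set A := Real.exp L with hA
  set E := Real.exp (-L) with hE
  have hApos : 0 < A := Real.exp_pos L
  have hEpos : 0 < E := Real.exp_pos _
  have hA11 : 11 ≤ A := by
    have := Real.add_one_le_exp L; linarith
  have hE5 : E ≤ 1/11 := by
    rw [le_div_iff₀ (by norm_num)]; nlinarith
  have ha1 : |(-1:ℝ) - (-1)| = 0 := by norm_num
  have ha2 : |(-1:ℝ) - 1| = 2 := by norm_num
  have ha3 : |(1:ℝ) - (-1)| = 2 := by norm_num
  have ha4 : |(1:ℝ) - 1| = 0 := by norm_num
  have hexp2 : Real.exp (L*2) = A*A := by rw [show L*2 = L+L by ring, Real.exp_add]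
  simp only [thetaCont, hcont, ha1, ha2, ha3, ha4, mul_zero, Real.exp_zero, hexp2,
    one_mul, mul_one, ← hE]
  have d1 : (0:ℝ) < 1 - E + A * A * E := by nlinarith
  have d2 : (0:ℝ) < A * A * (1 - E) + E := by nlinarith
  have f1 : (-1 * (1 - E) + A * A * E) / (1 - E + A * A * E) ≤ 1 := by
    rw [div_le_one d1]; nlinarith
  have f1' : 1 - 2*E ≤ (-1 * (1 - E) + A * A * E) / (1 - E + A * A * E) := by
    rw [le_div_iff₀ d1]; nlinarith
  have f2 : (A * A * -1 * (1 - E) + E) / (A * A * (1 - E) + E) ≤ 1 := by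
    rw [div_le_one d2]; nlinarith
  have f2' : (-1 : ℝ) ≤ (A * A * -1 * (1 - E) + E) / (A * A * (1 - E) + E) := by
    rw [le_div_iff₀ d2]; nlinarith
  set u := (-1 * (1 - E) + A * A * E) / (1 - E + A * A * E) with hu
  set v := (A * A * -1 * (1 - E) + E) / (A * A * (1 - E) + E) with hv
  rw [abs_le]
  have hOneE : (0:ℝ) ≤ 1 - E := by linarith
  constructor
  · nlinarith [mul_le_mul_of_nonneg_right f1' hOneE, mul_le_mul_of_nonneg_right f2' hEpos.le]
  · nlinarith [mul_le_mul_of_nonneg_right f1 hOneE, mul_le_mul_of_nonneg_right f2 hEpos.le]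

/-- Part (ii), probability bound: with probability at least `1/(2e)` all samples are `-1`. -/
lemma allNegOne_prob (L : ℝ) (hL : 10 ≤ L) (n : ℕ) (hn : n = ⌈Real.exp L⌉₊) :
    ENNReal.ofReal (1 / (2 * Real.exp 1)) ≤
      Measure.pi (fun _ : Fin n => muTwo L) {X : Fin n → ℝ | ∀ i, X i = -1} := by
  have hset : {X : Fin n → ℝ | ∀ i, X i = -1} = Set.univ.pi (fun _ => {-1}) := by
    ext X; simp [Set.mem_pi]
  have hsingle : muTwo L {-1} = ENNReal.ofReal (1 - Real.exp (-L)) := by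
    simp [muTwo, Measure.dirac_apply]
    norm_num
  rw [hset, Measure.pi_pi]
  simp only [hsingle, Finset.prod_const, Finset.card_univ, Fintype.card_fin]
  set E := Real.exp (-L) with hE
  have hEpos : 0 < E := Real.exp_pos _
  have hAE : Real.exp L * E = 1 := by rw [hE, ← Real.exp_add]; simp
  have hA11 : 11 ≤ Real.exp L := by have := Real.add_one_le_exp L; linarith
  have hE5 : E ≤ 1/11 := by rw [le_div_iff₀ (by norm_num)]; nlinarith
  have h1E : (0:ℝ) < 1 - E := by linarith
  rw [← ENNReal.ofReal_pow (by linarith)]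
  apply ENNReal.ofReal_le_ofReal
  set t := E / (1 - E) with ht
  have hstep : Real.exp (-t) ≤ 1 - E := by
    have h1 : t + 1 ≤ Real.exp t := Real.add_one_le_exp t
    have h3 : Real.exp (-t) * Real.exp t = 1 := by rw [← Real.exp_add]; simp
    have h4 : (1 - E) * t = E := by rw [ht]; field_simp
    nlinarith [Real.exp_pos t, Real.exp_pos (-t),
      mul_le_mul_of_nonneg_left h1 h1E.le]
  have hpow : Real.exp (-t) ^ n ≤ (1 - E) ^ n :=
    pow_le_pow_left₀ (Real.exp_pos _).le hstep n
  have hexpn : Real.exp (-t) ^ n = Real.exp ((n : ℝ) * (-t)) := by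
    rw [← Real.exp_nat_mul]
  have hnle : (n : ℝ) ≤ Real.exp L + 1 := by
    rw [hn]; exact (Nat.ceil_lt_add_one (Real.exp_pos L).le).le
  have hnt : (n : ℝ) * t ≤ 3/2 := by
    rw [ht, ← mul_div_assoc, div_le_iff₀ h1E]
    nlinarith
  have hfinal : 1 / (2 * Real.exp 1) ≤ Real.exp ((n : ℝ) * (-t)) := by
    have he1 : Real.exp ((n:ℝ) * (-t)) * Real.exp 1 = Real.exp (1 - (n:ℝ)*t) := by
      rw [← Real.exp_add]; ring_nf
    have he2 : 2 - (n:ℝ)*t ≤ Real.exp (1 - (n:ℝ)*t) := by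
      have := Real.add_one_le_exp (1 - (n:ℝ)*t); linarith
    rw [div_le_iff₀ (by positivity)]
    nlinarith [Real.exp_pos ((n:ℝ) * (-t)), Real.exp_pos (1:ℝ)]
  calc 1 / (2 * Real.exp 1) ≤ Real.exp ((n:ℝ) * (-t)) := hfinal
    _ = Real.exp (-t) ^ n := hexpn.symm
    _ ≤ (1 - E) ^ n := hpow

/-- Part (ii), discrete output: if all samples are `-1`, the discrete output is `-1`. -/
lemma thetaDisc_allNegOne (L : ℝ) (n : ℕ) (hnpos : 0 < n)
    (X : Fin n → ℝ) (hX : ∀ i, X i = -1) : thetaDisc L X = -1 := by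
  have hn0 : (n : ℝ) ≠ 0 := Nat.cast_ne_zero.mpr hnpos.ne'
  simp [thetaDisc, hX, Finset.sum_const, Finset.card_univ]
  field_simp

/-- Counterexample showing the necessity of the regularity assumption: for `L ≥ 10` and
`n = ⌈e^L⌉` i.i.d. samples, the continuous output is within `5·e^{-L}` of `1`, while with
probability at least `1/(2e)` all samples equal `-1`, in which case the discrete output is
`-1` and the output error is at least `1`. -/
theorem stmt8 (L : ℝ) (hL : 10 ≤ L) (n : ℕ) (hn : n = ⌈Real.exp L⌉₊) :
    |thetaCont L - 1| ≤ 5 * Real.exp (-L) ∧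
    ENNReal.ofReal (1 / (2 * Real.exp 1)) ≤
      Measure.pi (fun _ : Fin n => muTwo L) {X : Fin n → ℝ | ∀ i, X i = -1} ∧
    (∀ X : Fin n → ℝ, (∀ i, X i = -1) →
      thetaDisc L X = -1 ∧ 1 ≤ |thetaCont L - thetaDisc L X|) := by
  have h1 := thetaCont_close L hL
  refine ⟨h1, allNegOne_prob L hL n hn, ?_⟩
  intro X hX
  have hnpos : 0 < n := by rw [hn]; exact Nat.ceil_pos.mpr (Real.exp_pos L)
  have hd := thetaDisc_allNegOne L n hnpos X hX
  refine ⟨hd, ?_⟩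
  rw [hd]
  have hE5 : Real.exp (-L) ≤ 1/11 := by
    rw [le_div_iff₀ (by norm_num)]
    have hAE : Real.exp L * Real.exp (-L) = 1 := by rw [← Real.exp_add]; simp
    have hA11 : 11 ≤ Real.exp L := by have := Real.add_one_le_exp L; linarith
    nlinarith [Real.exp_pos (-L)]
  have hb := abs_le.mp h1
  rw [abs_of_nonneg (by linarith [hb.1])]
  linarith [hb.1]
end

section
/- Let (χ, μ) be a probability space and w: χ × χ → [0, 1] a symmetric measurable kernel with degree function deg(x) = ∫_χ w(x,z) dμ(z). Let n ≥ 2, let X₁, …, Xₙ be i.i.d. samples from μ, and define the n×n matrices: A with A_{ij} = w(Xᵢ, Xⱼ) for i ≠ j and A_{ii} = 0; the diagonal matrix D with D_{ii} = Σ_j A_{ij}; and the diagonal matrix Δ with Δ_{ii} = deg(Xᵢ). Then for every τ > 0, with probability at least 1 − 2·n·e^{−2τ²}: |(1/(n−1))·D_{ii} − Δ_{ii}| ≤ 2τ/√n for every i ∈ {1, …, n}. -/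
/-!
Fix a vertex `i` and condition on `Xᵢ = x`. The off-diagonal entries `w x Xⱼ`, `j ≠ i`, are
then `n - 1` i.i.d. random variables with values in `[0, 1]` and mean `deg x`, so Hoeffding's
inequality bounds the probability that their average misses `deg x` by more than `s = 2τ/√n` by
`2 exp (-2 (n - 1) s²) ≤ 2 exp (-2τ²)`, the last step because `4 (n - 1) ≥ n`. A union bound
over the `n` vertices concludes.
-/

open MeasureTheory ProbabilityTheory Real

section Hoeffding

variable {χ : Type*} [MeasurableSpace χ] (μ : Measure χ) [IsProbabilityMeasure μ]

theorem measureReal_le_abs_sum_sub_integral_le {ι : Type*} [Fintype ι] {g : χ → ℝ}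
    (hg : Measurable g) {a b : ℝ} (hgab : ∀ z, g z ∈ Set.Icc a b) {ε : ℝ} (hε : 0 ≤ ε) :
    (Measure.pi fun _ : ι => μ).real {y | ε ≤ |∑ j, (g (y j) - ∫ z, g z ∂μ)|} ≤
      2 * exp (-2 * ε ^ 2 / (Fintype.card ι * (b - a) ^ 2)) := by
  set ν := Measure.pi fun _ : ι => μ
  set Y : ι → (ι → χ) → ℝ := fun j y => g (y j) - ∫ z, g z ∂μ
  have hsubG : ∀ j, HasSubgaussianMGF (Y j) ((‖b - a‖₊ / 2) ^ 2) ν := fun j =>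
    .of_map (measurable_pi_apply j).aemeasurable <| by
      rw [(measurePreserving_eval (fun _ : ι => μ) j).map_eq]
      exact hasSubgaussianMGF_of_mem_Icc hg.aemeasurable (ae_of_all _ hgab)
  have hindep : iIndepFun Y ν :=
    iIndepFun_pi (X := fun _ z => g z - ∫ z, g z ∂μ) fun _ => (hg.sub_const _).aemeasurable
  have hupper := HasSubgaussianMGF.measure_sum_ge_le_of_iIndepFun hindep (s := Finset.univ)
    (fun j _ => hsubG j) hε
  have hlower := HasSubgaussianMGF.measure_sum_ge_le_of_iIndepFun
    (hindep.comp (fun _ => Neg.neg) fun _ => measurable_neg) (s := Finset.univ)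
    (fun j _ => (hsubG j).neg) hε
  have hexp : exp (-ε ^ 2 / (2 * ∑ _j : ι, (‖b - a‖₊ / 2 : NNReal) ^ 2)) =
      exp (-2 * ε ^ 2 / (Fintype.card ι * (b - a) ^ 2)) := by
    congr 1
    push_cast
    rw [Finset.sum_const, Finset.card_univ, nsmul_eq_mul, norm_eq_abs, div_pow, sq_abs,
      show 2 * (Fintype.card ι * ((b - a) ^ 2 / 2 ^ 2)) = Fintype.card ι * (b - a) ^ 2 / 2 by ring,
      div_div_eq_mul_div]
    ring
  have hsplit : {y | ε ≤ |∑ j, Y j y|} ⊆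
      {y | ε ≤ ∑ j, Y j y} ∪ {y | ε ≤ ∑ j, (Neg.neg ∘ Y j) y} := by
    intro y (hy : ε ≤ |∑ j, Y j y|)
    rcases le_abs'.1 hy with h | h
    · right
      simp only [Set.mem_ofPred_eq, Function.comp_apply, Finset.sum_neg_distrib]
      linarith
    · exact .inl h
  calc ν.real {y | ε ≤ |∑ j, Y j y|}
      ≤ ν.real {y | ε ≤ ∑ j, Y j y} + ν.real {y | ε ≤ ∑ j, (Neg.neg ∘ Y j) y} :=
        (measureReal_mono hsplit).trans (measureReal_union_le _ _)
    _ ≤ _ := by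
        rw [← hexp]
        linarith

theorem measure_lt_abs_mean_sub_integral_le {ι : Type*} [Fintype ι] [Nonempty ι] {g : χ → ℝ}
    (hg : Measurable g) {a b : ℝ} (hgab : ∀ z, g z ∈ Set.Icc a b) {s : ℝ} (hs : 0 ≤ s) :
    (Measure.pi fun _ : ι => μ) {y | s < |(∑ j, g (y j)) / Fintype.card ι - ∫ z, g z ∂μ|} ≤
      ENNReal.ofReal (2 * exp (-2 * Fintype.card ι * s ^ 2 / (b - a) ^ 2)) := by
  have hcard : (0 : ℝ) < Fintype.card ι := by exact_mod_cast Fintype.card_pos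
  have hsub : {y : ι → χ | s < |(∑ j, g (y j)) / Fintype.card ι - ∫ z, g z ∂μ|} ⊆
      {y | Fintype.card ι * s ≤ |∑ j, (g (y j) - ∫ z, g z ∂μ)|} := by
    intro y (hy : s < _)
    have hsum : ∑ j, (g (y j) - ∫ z, g z ∂μ) =
        Fintype.card ι * ((∑ j, g (y j)) / Fintype.card ι - ∫ z, g z ∂μ) := by
      rw [Finset.sum_sub_distrib, Finset.sum_const, Finset.card_univ, nsmul_eq_mul]
      field_simp
    show (Fintype.card ι : ℝ) * s ≤ _
    rw [hsum, abs_mul, abs_of_pos hcard]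
    exact (mul_lt_mul_of_pos_left hy hcard).le
  calc _ ≤ _ := measure_mono hsub
    _ = ENNReal.ofReal ((Measure.pi fun _ : ι => μ).real
          {y | Fintype.card ι * s ≤ |∑ j, (g (y j) - ∫ z, g z ∂μ)|}) := (ofReal_measureReal).symm
    _ ≤ _ := by
        gcongr
        refine (measureReal_le_abs_sum_sub_integral_le μ hg hgab (by positivity)).trans_eq ?_
        rw [← mul_div_mul_left (-2 * Fintype.card ι * s ^ 2) ((b - a) ^ 2) hcard.ne']
        ring_nf

theorem measure_pi_removeNth_preimage_le {m : ℕ} (i : Fin (m + 1))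
    {B : Set (χ × (Fin m → χ))} (hB : MeasurableSet B) {δ : ENNReal}
    (hδ : ∀ x, (Measure.pi fun _ : Fin m => μ) (Prod.mk x ⁻¹' B) ≤ δ) :
    (Measure.pi fun _ : Fin (m + 1) => μ) {X | (X i, i.removeNth X) ∈ B} ≤ δ :=
  calc (Measure.pi fun _ : Fin (m + 1) => μ) {X | (X i, i.removeNth X) ∈ B}
      = (μ.prod (Measure.pi fun _ : Fin m => μ)) B :=
        (measurePreserving_piFinSuccAbove (fun _ => μ) i).measure_preimage hB.nullMeasurableSet
    _ = ∫⁻ x, (Measure.pi fun _ : Fin m => μ) (Prod.mk x ⁻¹' B) ∂μ := Measure.prod_apply hB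
    _ ≤ ∫⁻ _, δ ∂μ := lintegral_mono hδ
    _ = δ := by simp

theorem measure_lt_abs_mean_removeNth_sub_integral_le {m : ℕ} [Nonempty (Fin m)]
    (i : Fin (m + 1)) {w : χ → χ → ℝ} (hw : Measurable fun q : χ × χ => w q.1 q.2) {a b : ℝ}
    (hwab : ∀ x y, w x y ∈ Set.Icc a b) {s : ℝ} (hs : 0 ≤ s) :
    (Measure.pi fun _ : Fin (m + 1) => μ)
        {X | s < |(∑ k, w (X i) (i.removeNth X k)) / m - ∫ z, w (X i) z ∂μ|} ≤
      ENNReal.ofReal (2 * exp (-2 * m * s ^ 2 / (b - a) ^ 2)) := by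
  set B : Set (χ × (Fin m → χ)) := {p | s < |(∑ k, w p.1 (p.2 k)) / m - ∫ z, w p.1 z ∂μ|}
  have hB : MeasurableSet B := by
    refine measurableSet_lt measurable_const (Measurable.abs (Measurable.sub ?_ ?_))
    · exact (Finset.measurable_sum _ fun k _ => hw.comp
        (measurable_fst.prodMk ((measurable_pi_apply k).comp measurable_snd))).div_const _
    · exact hw.stronglyMeasurable.integral_prod_right'.measurable.comp measurable_fst
  refine measure_pi_removeNth_preimage_le μ i hB fun x => ?_
  have hx := measure_lt_abs_mean_sub_integral_le μ (ι := Fin m)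
    (hw.comp measurable_prodMk_left : Measurable (w x)) (hwab x) hs
  rwa [Fintype.card_fin] at hx

end Hoeffding

theorem one_sub_card_mul_le_measure_iInter {Ω ι : Type*} [MeasurableSpace Ω] [Fintype ι]
    (ν : Measure Ω) [IsProbabilityMeasure ν] {E : ι → Set Ω} {δ : ENNReal}
    (hE : ∀ i, ν (E i)ᶜ ≤ δ) :
    1 - Fintype.card ι * δ ≤ ν (⋂ i, E i) := by
  have hunion : ν (⋂ i, E i)ᶜ ≤ Fintype.card ι * δ :=
    calc ν (⋂ i, E i)ᶜ = ν (⋃ i, (E i)ᶜ) := by rw [Set.compl_iInter]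
      _ ≤ ∑ i, ν (E i)ᶜ := measure_iUnion_fintype_le ν _
      _ ≤ ∑ _i : ι, δ := Finset.sum_le_sum fun i _ => hE i
      _ = Fintype.card ι * δ := by simp
  calc 1 - Fintype.card ι * δ ≤ 1 - ν (⋂ i, E i)ᶜ := tsub_le_tsub_left hunion 1
    _ ≤ ν (⋂ i, E i) := by
        rw [tsub_le_iff_right, ← measure_univ (μ := ν), ← Set.union_compl_self (⋂ i, E i)]
        exact measure_union_le _ _

theorem Fin.sum_ite_eq_sum_removeNth {M : Type*} [AddCommMonoid M] {m : ℕ} (i : Fin (m + 1))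
    (f : Fin (m + 1) → M) : (∑ j, if i = j then 0 else f j) = ∑ k, i.removeNth f k := by
  rw [Fin.sum_univ_succAbove _ i]
  simp [Fin.removeNth, (Fin.succAbove_ne i _).symm]

theorem sq_le_mul_sq_two_mul_div_sqrt_succ {m : ℕ} (hm : 1 ≤ m) (τ : ℝ) :
    τ ^ 2 ≤ m * (2 * τ / √((m + 1 : ℕ) : ℝ)) ^ 2 := by
  have hm' : (1 : ℝ) ≤ m := by exact_mod_cast hm
  rw [div_pow, sq_sqrt (by positivity), mul_div_assoc', le_div_iff₀ (by positivity)]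
  push_cast
  nlinarith [sq_nonneg τ]

theorem stmt11_general
    {χ : Type*} [MeasurableSpace χ] (μ : Measure χ) [IsProbabilityMeasure μ]
    (w : χ → χ → ℝ) (hwmeas : Measurable fun q : χ × χ => w q.1 q.2)
    (hw01 : ∀ x y, w x y ∈ Set.Icc (0 : ℝ) 1)
    (n : ℕ) (hn : 2 ≤ n)
    (τ : ℝ) (hτ : 0 < τ) :
    ENNReal.ofReal (1 - 2 * n * Real.exp (-2 * τ ^ 2)) ≤
      Measure.pi (fun _ : Fin n => μ)
        {X : Fin n → χ | ∀ i : Fin n,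
          |(1 / ((n : ℝ) - 1)) * (∑ j, if i = j then (0 : ℝ) else w (X i) (X j)) -
            ∫ z, w (X i) z ∂μ| ≤ 2 * τ / Real.sqrt n} := by
  obtain ⟨m, rfl⟩ : ∃ m, n = m + 1 := ⟨n - 1, by omega⟩
  have : Nonempty (Fin m) := ⟨⟨0, by omega⟩⟩
  set s := 2 * τ / √((m + 1 : ℕ) : ℝ)
  have hτs : τ ^ 2 ≤ m * s ^ 2 := sq_le_mul_sq_two_mul_div_sqrt_succ (by omega) τ
  have hbad (i : Fin (m + 1)) : Measure.pi (fun _ => μ)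
      {X : Fin (m + 1) → χ | |(1 / (((m + 1 : ℕ) : ℝ) - 1)) *
        (∑ j, if i = j then (0 : ℝ) else w (X i) (X j)) - ∫ z, w (X i) z ∂μ| ≤ s}ᶜ ≤
      ENNReal.ofReal (2 * exp (-2 * τ ^ 2)) := by
    have hi := measure_lt_abs_mean_removeNth_sub_integral_le μ i hwmeas hw01 (s := s)
      (by positivity)
    simp only [sub_zero, one_pow, div_one] at hi
    refine le_of_eq_of_le ?_
      (hi.trans (ENNReal.ofReal_le_ofReal (by gcongr 2 * exp ?_; linarith)))
    congr 1
    ext X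
    simp only [Set.mem_compl_iff, Set.mem_ofPred_eq, not_le, Fin.sum_ite_eq_sum_removeNth]
    push_cast
    rw [add_sub_cancel_right, one_div_mul_eq_div]
    rfl
  calc ENNReal.ofReal (1 - 2 * ((m + 1 : ℕ) : ℝ) * exp (-2 * τ ^ 2))
      = 1 - Fintype.card (Fin (m + 1)) * ENNReal.ofReal (2 * exp (-2 * τ ^ 2)) := by
        rw [ENNReal.ofReal_sub _ (by positivity), ENNReal.ofReal_one, Fintype.card_fin,
          ← ENNReal.ofReal_natCast, ← ENNReal.ofReal_mul (by positivity), mul_assoc,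
          mul_left_comm]
    _ ≤ _ := one_sub_card_mul_le_measure_iInter _ hbad
    _ = _ := by rw [Set.iInter_ofPred]

/-- Concentration of degrees for a graphon sample: with probability at least
`1 − 2n·e^{−2τ²}`, for every `i`, the scaled degree `(1/(n−1))·D_{ii}` of the sampled
weighted graph is within `2τ/√n` of the graphon degree `deg(Xᵢ) = ∫ w(Xᵢ, z) dμ(z)`. -/
theorem stmt11
    {χ : Type*} [MeasurableSpace χ] (μ : Measure χ) [IsProbabilityMeasure μ]
    (w : χ → χ → ℝ) (hwmeas : Measurable fun q : χ × χ => w q.1 q.2)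
    (hwsymm : ∀ x y, w x y = w y x)
    (hw01 : ∀ x y, w x y ∈ Set.Icc (0 : ℝ) 1)
    (n : ℕ) (hn : 2 ≤ n)
    (τ : ℝ) (hτ : 0 < τ) :
    ENNReal.ofReal (1 - 2 * n * Real.exp (-2 * τ ^ 2)) ≤
      Measure.pi (fun _ : Fin n => μ)
        {X : Fin n → χ | ∀ i : Fin n,
          |(1 / ((n : ℝ) - 1)) * (∑ j, if i = j then (0 : ℝ) else w (X i) (X j)) -
            ∫ z, w (X i) z ∂μ| ≤ 2 * τ / Real.sqrt n} :=
  stmt11_general μ w hwmeas hw01 n hn τ hτ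
end

section
/- Let n ≥ 2, k ≥ 1 with n ≥ 2k, and δ ∈ (0, 1]. Let A be a symmetric n×n matrix with entries in [0,1] and zero diagonal, let D be the diagonal matrix with D_{ii} = Σ_j A_{ij}, assumed strictly positive, and let Δ be a diagonal matrix with Δ_{ii} ≥ δ for all i. Set P = D^{−1}A and Π = Δ^{−1}A. Then, with ‖M‖_∞ denoting the maximum absolute value of an entry: ‖P^k − (1/(n−1)^k)·Π^k‖_∞ ≤ 2·k·δ^{−k}·max_i |D_{ii} − (n−1)·Δ_{ii}| / (D_{ii}·(n−1)·Δ_{ii}). -/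
/-!
Write `P = D⁻¹A` and `Q = ((n-1)Δ)⁻¹A`, so that `Q^k = (n-1)^{-k} Π^k`, and let `ε` be the
maximum in the bound. Then `P - Q = EA` with `E` diagonal and `|E_ii| ≤ ε`, so the entries of
`P - Q` are at most `ε` and its rows have `ℓ¹`-norm at most `(n-1)ε`. The rows of `Q` have
`ℓ¹`-norm at most `δ⁻¹` and its entries are at most `δ⁻¹/(n-1)`, hence every entry of
`(P - Q) Q^r` is at most `ε δ^{-r}`. Since `P` is stochastic, the telescoping identity
`P^k - Q^k = ∑_{m<k} P^m (P - Q) Q^{k-1-m}` gives the bound `k δ^{-k} ε`.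
-/

open Finset Matrix

theorem pow_sub_pow_eq_sum {R : Type*} [Ring R] (x y : R) (k : ℕ) :
    x ^ k - y ^ k = ∑ m ∈ range k, x ^ m * (x - y) * y ^ (k - 1 - m) := by
  calc x ^ k - y ^ k =
        ∑ m ∈ range k, (x ^ (m + 1) * y ^ (k - (m + 1)) - x ^ m * y ^ (k - m)) := by
        rw [sum_range_sub (fun m => x ^ m * y ^ (k - m))]; simp
    _ = _ := sum_congr rfl fun m hm => by
        obtain ⟨j, rfl⟩ := Nat.exists_eq_add_of_lt (mem_range.mp hm)
        rw [show m + j + 1 - (m + 1) = j by omega, show m + j + 1 - m = j + 1 by omega,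
          show m + j + 1 - 1 - m = j by omega, pow_succ x, pow_succ' y]
        noncomm_ring

section

variable {ι : Type*} [Fintype ι]

theorem abs_mul_apply_le {l n : Type*} (X : Matrix l ι ℝ) (Y : Matrix ι n ℝ) {t : ℝ} {i : l}
    {j : n} (hY : ∀ a, |Y a j| ≤ t) : |(X * Y) i j| ≤ (∑ a, |X i a|) * t := by
  rw [mul_apply, sum_mul]
  refine (abs_sum_le_sum_abs _ _).trans (sum_le_sum fun a _ => ?_)
  rw [abs_mul]
  exact mul_le_mul_of_nonneg_left (hY a) (abs_nonneg _)

theorem sum_abs_mul_apply_le {l n : Type*} [Fintype n] (X : Matrix l ι ℝ) (Y : Matrix ι n ℝ)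
    {t : ℝ} (hY : ∀ a, ∑ j, |Y a j| ≤ t) (i : l) :
    ∑ j, |(X * Y) i j| ≤ (∑ a, |X i a|) * t := by
  calc ∑ j, |(X * Y) i j| ≤ ∑ j, ∑ a, |X i a| * |Y a j| :=
        sum_le_sum fun j _ => by
          rw [mul_apply]
          exact (abs_sum_le_sum_abs _ _).trans_eq (by simp only [abs_mul])
    _ = ∑ a, |X i a| * ∑ j, |Y a j| := by rw [sum_comm]; simp only [mul_sum]
    _ ≤ ∑ a, |X i a| * t := sum_le_sum fun a _ => mul_le_mul_of_nonneg_left (hY a) (abs_nonneg _)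
    _ = (∑ a, |X i a|) * t := by rw [sum_mul]

theorem sum_abs_pow_apply_le [DecidableEq ι] {Q : Matrix ι ι ℝ} {c : ℝ}
    (hQ : ∀ a, ∑ b, |Q a b| ≤ c) (r : ℕ) (i : ι) : ∑ j, |(Q ^ r) i j| ≤ c ^ r := by
  induction r generalizing i with
  | zero => simp [one_apply, apply_ite (abs : ℝ → ℝ)]
  | succ r ih =>
    have hc : 0 ≤ c := (sum_nonneg fun b _ => abs_nonneg (Q i b)).trans (hQ i)
    rw [pow_succ', pow_succ' c]
    exact (sum_abs_mul_apply_le Q _ ih i).trans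
      (mul_le_mul_of_nonneg_right (hQ i) (pow_nonneg hc r))

theorem abs_mul_pow_apply_le [DecidableEq ι] {M Q : Matrix ι ι ℝ} {N ε c : ℝ} (hN : 0 < N)
    (hM : ∀ a b, |M a b| ≤ ε) (hMrow : ∀ a, ∑ b, |M a b| ≤ N * ε)
    (hQrow : ∀ a, ∑ b, |Q a b| ≤ c) (hQ : ∀ a b, |Q a b| ≤ c / N) (r : ℕ) (i j : ι) :
    |(M * Q ^ r) i j| ≤ ε * c ^ r := by
  cases r with
  | zero => simpa using hM i j
  | succ s =>
    have hentry : ∀ a, |(Q ^ s * Q) a j| ≤ c ^ s * (c / N) := fun a =>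
      (abs_mul_apply_le _ _ (hQ · j)).trans <| mul_le_mul_of_nonneg_right
        (sum_abs_pow_apply_le hQrow s a) ((abs_nonneg _).trans (hQ a j))
    calc |(M * Q ^ (s + 1)) i j| ≤ (∑ b, |M i b|) * (c ^ s * (c / N)) := by
          rw [pow_succ]; exact abs_mul_apply_le _ _ hentry
      _ ≤ (N * ε) * (c ^ s * (c / N)) :=
          mul_le_mul_of_nonneg_right (hMrow i) ((abs_nonneg _).trans (hentry i))
      _ = ε * c ^ (s + 1) := by field_simp; ring

theorem abs_pow_sub_pow_apply_le [DecidableEq ι] {P Q : Matrix ι ι ℝ} {k : ℕ} {η : ℝ}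
    (hP : ∀ a, ∑ b, |P a b| ≤ 1) (hPQ : ∀ r < k, ∀ a j, |((P - Q) * Q ^ r) a j| ≤ η)
    (i j : ι) : |(P ^ k - Q ^ k) i j| ≤ k * η := by
  rw [pow_sub_pow_eq_sum, Matrix.sum_apply]
  refine (abs_sum_le_sum_abs _ _).trans ?_
  calc ∑ m ∈ range k, |(P ^ m * (P - Q) * Q ^ (k - 1 - m)) i j| ≤ ∑ m ∈ range k, η :=
        sum_le_sum fun m hm => by
          have hη : ∀ a, |((P - Q) * Q ^ (k - 1 - m)) a j| ≤ η :=
            fun a => hPQ _ (by have := mem_range.mp hm; omega) a j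
          rw [mul_assoc]
          refine (abs_mul_apply_le _ _ hη).trans ?_
          simpa using mul_le_mul_of_nonneg_right (sum_abs_pow_apply_le hP m i)
            ((abs_nonneg _).trans (hη i))
    _ = k * η := by simp

theorem sum_le_card_sub_one [DecidableEq ι] {A : Matrix ι ι ℝ} {i : ι} (hA : ∀ j, A i j ≤ 1)
    (hdiag : A i i = 0) : ∑ j, A i j ≤ Fintype.card ι - 1 := by
  rw [← sum_erase univ hdiag]
  calc ∑ j ∈ univ.erase i, A i j ≤ ∑ j ∈ univ.erase i, (1 : ℝ) := sum_le_sum fun j _ => hA j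
    _ = Fintype.card ι - 1 := by
      simp [card_erase_of_mem, Nat.cast_sub (Fintype.card_pos_iff.mpr ⟨i⟩)]

end

section

variable {m n : Type*}

/-- `rowDiv A d` is `D⁻¹ A` for the diagonal matrix `D = diag d`. -/
noncomputable def rowDiv (A : Matrix m n ℝ) (d : m → ℝ) : Matrix m n ℝ :=
  of fun a b => A a b / d a

theorem rowDiv_mul_left (A : Matrix m n ℝ) (c : ℝ) (d : m → ℝ) :
    rowDiv A (fun a => c * d a) = c⁻¹ • rowDiv A d := by
  ext a b
  simp only [rowDiv, of_apply, Matrix.smul_apply, smul_eq_mul]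
  rw [div_mul_eq_div_div_swap, div_eq_inv_mul]

variable {A : Matrix m n ℝ} {a : m} {b : n}

theorem abs_rowDiv_sub_rowDiv_apply {x y : m → ℝ} (hA : 0 ≤ A a b) (hx : 0 < x a)
    (hy : 0 < y a) : |(rowDiv A x - rowDiv A y) a b| = A a b * (|x a - y a| / (x a * y a)) := by
  rw [Matrix.sub_apply, rowDiv, rowDiv, of_apply, of_apply,
    show A a b / x a - A a b / y a = A a b * ((y a - x a) / (x a * y a)) by field_simp, abs_mul,
    abs_of_nonneg hA, abs_div, abs_of_pos (mul_pos hx hy), abs_sub_comm]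

theorem abs_rowDiv_mul_apply_le {N δ : ℝ} {Δ : m → ℝ} (hA : A a b ∈ Set.Icc 0 1) (hN : 0 < N)
    (hδ : 0 < δ) (hΔ : δ ≤ Δ a) : |rowDiv A (fun a => N * Δ a) a b| ≤ δ⁻¹ / N := by
  calc |A a b / (N * Δ a)| = A a b / (N * Δ a) :=
        abs_of_nonneg (div_nonneg hA.1 (mul_pos hN (hδ.trans_le hΔ)).le)
    _ ≤ 1 / (N * δ) := div_le_div₀ zero_le_one hA.2 (mul_pos hN hδ) (by gcongr)
    _ = δ⁻¹ / N := by field_simp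

variable [Fintype n]

theorem sum_abs_rowDiv_mul_le {N δ : ℝ} {Δ : m → ℝ} (hA : ∀ b, 0 ≤ A a b)
    (hrow : ∑ b, A a b ≤ N) (hN : 0 < N) (hδ : 0 < δ) (hΔ : δ ≤ Δ a) :
    ∑ b, |rowDiv A (fun a => N * Δ a) a b| ≤ δ⁻¹ := by
  have hNΔ : 0 < N * Δ a := mul_pos hN (hδ.trans_le hΔ)
  calc ∑ b, |A a b / (N * Δ a)| = (∑ b, A a b) / (N * Δ a) := by
        simp only [abs_div, abs_of_nonneg (hA _), abs_of_pos hNΔ, sum_div]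
    _ ≤ N / (N * δ) := div_le_div₀ hN.le hrow (mul_pos hN hδ) (by gcongr)
    _ = δ⁻¹ := by field_simp

theorem sum_abs_rowDiv_rowSum (hA : ∀ b, 0 ≤ A a b) (hD : 0 < ∑ b, A a b) :
    ∑ b, |rowDiv A (fun a => ∑ l, A a l) a b| = 1 := by
  simp [rowDiv, abs_div, abs_of_nonneg (hA _), abs_of_pos hD, ← sum_div, hD.ne']

end

theorem abs_rowDiv_pow_sub_rowDiv_pow_apply_le {ι : Type*} [Fintype ι] [DecidableEq ι]
    {A : Matrix ι ι ℝ} {N δ ε : ℝ} {Δ : ι → ℝ} (hN : 0 < N) (hδ0 : 0 < δ) (hδ1 : δ ≤ 1)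
    (h01 : ∀ a b, A a b ∈ Set.Icc 0 1) (hrow : ∀ a, ∑ b, A a b ≤ N)
    (hD : ∀ a, 0 < ∑ b, A a b) (hΔ : ∀ a, δ ≤ Δ a)
    (hε : ∀ a, |(∑ b, A a b) - N * Δ a| / ((∑ b, A a b) * (N * Δ a)) ≤ ε) (k : ℕ) (i j : ι) :
    |(rowDiv A (fun a => ∑ l, A a l) ^ k - rowDiv A (fun a => N * Δ a) ^ k) i j| ≤
      k * (ε * (δ ^ k)⁻¹) := by
  have hNΔ : ∀ a, 0 < N * Δ a := fun a => mul_pos hN (hδ0.trans_le (hΔ a))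
  set f : ι → ℝ := fun a => |(∑ b, A a b) - N * Δ a| / ((∑ b, A a b) * (N * Δ a))
  have hf0 : ∀ a, 0 ≤ f a := fun a => div_nonneg (abs_nonneg _) (mul_pos (hD a) (hNΔ a)).le
  set P := rowDiv A (fun a => ∑ l, A a l)
  set Q := rowDiv A (fun a => N * Δ a)
  have hPQ : ∀ a b, |(P - Q) a b| = A a b * f a := fun a b =>
    abs_rowDiv_sub_rowDiv_apply (h01 a b).1 (hD a) (hNΔ a)
  have hM : ∀ a b, |(P - Q) a b| ≤ ε := fun a b => by
    rw [hPQ]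
    exact (mul_le_of_le_one_left (hf0 a) (h01 a b).2).trans (hε a)
  have hMrow : ∀ a, ∑ b, |(P - Q) a b| ≤ N * ε := fun a => by
    simp only [hPQ, ← sum_mul]
    exact mul_le_mul (hrow a) (hε a) (hf0 a) hN.le
  have hstep : ∀ r < k, ∀ a b, |((P - Q) * Q ^ r) a b| ≤ ε * (δ ^ k)⁻¹ := fun r hr a b => by
    refine (abs_mul_pow_apply_le hN hM hMrow
      (fun a => sum_abs_rowDiv_mul_le (h01 a · |>.1) (hrow a) hN hδ0 (hΔ a))
      (fun a b => abs_rowDiv_mul_apply_le (h01 a b) hN hδ0 (hΔ a)) r a b).trans ?_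
    rw [← inv_pow]
    exact mul_le_mul_of_nonneg_left (pow_le_pow_right₀ ((one_le_inv₀ hδ0).2 hδ1) hr.le)
      ((hf0 i).trans (hε i))
  exact abs_pow_sub_pow_apply_le (fun a => (sum_abs_rowDiv_rowSum (h01 a · |>.1) (hD a)).le)
    hstep i j

theorem stmt12_general (n k : ℕ) (hn : 2 ≤ n)
    (δ : ℝ) (hδ0 : 0 < δ) (hδ1 : δ ≤ 1)
    (A : Matrix (Fin n) (Fin n) ℝ)
    (h01 : ∀ i j, A i j ∈ Set.Icc (0 : ℝ) 1) (hdiag : ∀ i, A i i = 0)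
    (hD : ∀ i, 0 < ∑ j, A i j)
    (Δ : Fin n → ℝ) (hΔ : ∀ i, δ ≤ Δ i) :
    ∀ i j : Fin n,
      |((Matrix.of fun i' j' : Fin n => A i' j' / ∑ l, A i' l) ^ k) i j -
          (((n : ℝ) - 1) ^ k)⁻¹ *
            (((Matrix.of fun i' j' : Fin n => A i' j' / Δ i') ^ k) i j)| ≤
        2 * k * (δ ^ k)⁻¹ *
          ⨆ i' : Fin n, |(∑ j', A i' j') - ((n : ℝ) - 1) * Δ i'| /
            ((∑ j', A i' j') * (((n : ℝ) - 1) * Δ i')) := by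
  intro i j
  have hN : (0 : ℝ) < n - 1 := by
    have : (2 : ℝ) ≤ n := by exact_mod_cast hn
    linarith
  have hrow : ∀ a, ∑ b, A a b ≤ n - 1 := fun a => by
    simpa using sum_le_card_sub_one (fun b => (h01 a b).2) (hdiag a)
  have key := abs_rowDiv_pow_sub_rowDiv_pow_apply_le hN hδ0 hδ1 h01 hrow hD hΔ
    (le_ciSup (Set.finite_range _).bddAbove) k i j
  rw [rowDiv_mul_left, smul_pow, Matrix.sub_apply, Matrix.smul_apply, smul_eq_mul,
    inv_pow] at key
  have hbound_nonneg := (abs_nonneg _).trans key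
  calc _ ≤ _ := key
    _ ≤ _ := by linarith

/-- Deterministic comparison of powers of the random-walk transition matrix `P = D⁻¹A`
with powers of the kernel-normalized matrix `Π = Δ⁻¹A`: uniformly over entries,
`‖P^k − (1/(n−1)^k)·Π^k‖_∞ ≤ 2k·δ^{−k}·max_i |D_{ii} − (n−1)Δ_{ii}| / (D_{ii}·(n−1)·Δ_{ii})`. -/
theorem stmt12 (n k : ℕ) (hn : 2 ≤ n) (hk : 1 ≤ k) (hnk : 2 * k ≤ n)
    (δ : ℝ) (hδ0 : 0 < δ) (hδ1 : δ ≤ 1)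
    (A : Matrix (Fin n) (Fin n) ℝ) (hsymm : A.IsSymm)
    (h01 : ∀ i j, A i j ∈ Set.Icc (0 : ℝ) 1) (hdiag : ∀ i, A i i = 0)
    (hD : ∀ i, 0 < ∑ j, A i j)
    (Δ : Fin n → ℝ) (hΔ : ∀ i, δ ≤ Δ i) :
    ∀ i j : Fin n,
      |((Matrix.of fun i' j' : Fin n => A i' j' / ∑ l, A i' l) ^ k) i j -
          (((n : ℝ) - 1) ^ k)⁻¹ *
            (((Matrix.of fun i' j' : Fin n => A i' j' / Δ i') ^ k) i j)| ≤
        2 * k * (δ ^ k)⁻¹ *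
          ⨆ i' : Fin n, |(∑ j', A i' j') - ((n : ℝ) - 1) * Δ i'| /
            ((∑ j', A i' j') * (((n : ℝ) - 1) * Δ i')) :=
  stmt12_general n k hn δ hδ0 hδ1 A h01 hdiag hD Δ hΔ
end
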